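/- arXiv:2002.12614 — 2 statements merged into one kernel-verified Lean document; each statement's English description precedes it below -/
import Mathlib

section
/- Let G be a bipartite pseudotelepathy game, i.e., a bipartite game (nonnegative coefficients with ∑_{x,y} max_{a,b} G^{ab}_{xy} ≤ 1) such that ω_{Q²}(G) = 1 and ω_{L²}(G) < 1. Then the tripartite game Ĝ with coefficients Ĝ^{a₁a₂,b₁b₂,c₁c₂}_{x₁x₂,y₁y₂,z₁z₂} = G^{a₁b₁}_{x₁y₁} G^{a₂c₁}_{x₂z₁} G^{b₂c₂}_{y₂z₂} satisfies ω_{Q³}(Ĝ) = 1 and ω_{BL³_G}(Ĝ) < 1. -/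
open scoped BigOperators
open Kronecker
open scoped ComplexOrder

noncomputable section

namespace BellGames

/-- A POVM on `ℂ^d` with outcomes in `A`: positive semidefinite matrices summing to the
identity. -/
def IsPOVM {A : Type*} [Fintype A] {d : ℕ} (E : A → Matrix (Fin d) (Fin d) ℂ) : Prop :=
  (∀ a, (E a).PosSemidef) ∧ (∑ a, E a) = 1

/-- A bipartite quantum behaviour realized with local Hilbert spaces `ℂ^{d₁}` and `ℂ^{d₂}`:
`P(a,b|x,y) = ⟨ψ| Π_x^a ⊗ Λ_y^b |ψ⟩` for a unit vector `ψ` and POVMs `Π`, `Λ`. -/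
def IsQBeh2Dim {X Y A B : Type*} [Fintype A] [Fintype B] (d₁ d₂ : ℕ)
    (P : X → Y → A → B → ℝ) : Prop :=
  ∃ (ψ : Fin d₁ × Fin d₂ → ℂ)
    (E : X → A → Matrix (Fin d₁) (Fin d₁) ℂ)
    (F : Y → B → Matrix (Fin d₂) (Fin d₂) ℂ),
    (∑ i, Complex.normSq (ψ i)) = 1 ∧
    (∀ x, IsPOVM (E x)) ∧ (∀ y, IsPOVM (F y)) ∧
    ∀ x y a b, ((P x y a b : ℝ) : ℂ) =
      ∑ i, ∑ j, (starRingEnd ℂ) (ψ i) * ((E x a ⊗ₖ F y b) i j) * ψ j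

/-- A bipartite quantum behaviour (arbitrary finite local dimensions). -/
def IsQBeh2 {X Y A B : Type*} [Fintype A] [Fintype B] (P : X → Y → A → B → ℝ) : Prop :=
  ∃ d₁ d₂, IsQBeh2Dim d₁ d₂ P

/-- A tripartite quantum behaviour realized with local Hilbert spaces `ℂ^{d₁}`, `ℂ^{d₂}`,
`ℂ^{d₃}`: `P(a,b,c|x,y,z) = ⟨ψ| Π_x^a ⊗ Λ_y^b ⊗ Υ_z^c |ψ⟩` for a unit vector `ψ` and
POVMs `Π`, `Λ`, `Υ`. -/
def IsQBeh3Dim {X Y Z A B C : Type*} [Fintype A] [Fintype B] [Fintype C] (d₁ d₂ d₃ : ℕ)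
    (P : X → Y → Z → A → B → C → ℝ) : Prop :=
  ∃ (ψ : Fin d₁ × Fin d₂ × Fin d₃ → ℂ)
    (E : X → A → Matrix (Fin d₁) (Fin d₁) ℂ)
    (F : Y → B → Matrix (Fin d₂) (Fin d₂) ℂ)
    (G : Z → C → Matrix (Fin d₃) (Fin d₃) ℂ),
    (∑ i, Complex.normSq (ψ i)) = 1 ∧
    (∀ x, IsPOVM (E x)) ∧ (∀ y, IsPOVM (F y)) ∧ (∀ z, IsPOVM (G z)) ∧
    ∀ x y z a b c, ((P x y z a b c : ℝ) : ℂ) =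
      ∑ i, ∑ j, (starRingEnd ℂ) (ψ i) * ((E x a ⊗ₖ (F y b ⊗ₖ G z c)) i j) * ψ j

/-- A tripartite quantum behaviour (arbitrary finite local dimensions). -/
def IsQBeh3 {X Y Z A B C : Type*} [Fintype A] [Fintype B] [Fintype C]
    (P : X → Y → Z → A → B → C → ℝ) : Prop :=
  ∃ d₁ d₂ d₃, IsQBeh3Dim d₁ d₂ d₃ P

/-- A bipartite behaviour: nonnegative and normalized. -/
def IsBeh2 {X Y A B : Type*} [Fintype A] [Fintype B] (P : X → Y → A → B → ℝ) : Prop :=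
  (∀ x y a b, 0 ≤ P x y a b) ∧ ∀ x y, (∑ a, ∑ b, P x y a b) = 1

/-- A single-party behaviour: nonnegative and normalized. -/
def IsBeh1 {X A : Type*} [Fintype A] (P : X → A → ℝ) : Prop :=
  (∀ x a, 0 ≤ P x a) ∧ ∀ x, (∑ a, P x a) = 1

/-- A bipartite fully local behaviour: a convex combination of products of single-party
behaviours. -/
def IsLocal2 {X Y A B : Type*} [Fintype A] [Fintype B] (P : X → Y → A → B → ℝ) : Prop :=
  ∃ (m : ℕ) (p : Fin m → ℝ) (Q : Fin m → X → A → ℝ) (R : Fin m → Y → B → ℝ),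
    (∀ j, 0 ≤ p j) ∧ (∑ j, p j) = 1 ∧ (∀ j, IsBeh1 (Q j)) ∧ (∀ j, IsBeh1 (R j)) ∧
    ∀ x y a b, P x y a b = ∑ j, p j * Q j x a * R j y b

/-- A non-signalling bipartite behaviour: each marginal is independent of the other
party's input. -/
def IsNS2 {X Y A B : Type*} [Fintype A] [Fintype B] (Q : X → Y → A → B → ℝ) : Prop :=
  (∀ x x' y b, (∑ a, Q x y a b) = ∑ a, Q x' y a b) ∧
  (∀ x y y' a, (∑ b, Q x y a b) = ∑ b, Q x y' a b)

/-- A bilocal product term: the product of an arbitrary behaviour on two of the three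
parties with an arbitrary behaviour on the remaining party (any of the three
bipartitions). -/
def BilocTerm3 {X Y Z A B C : Type*} [Fintype A] [Fintype B] [Fintype C]
    (P : X → Y → Z → A → B → C → ℝ) : Prop :=
  (∃ Q R, IsBeh2 Q ∧ IsBeh1 R ∧ ∀ x y z a b c, P x y z a b c = Q x y a b * R z c) ∨
  (∃ Q R, IsBeh2 Q ∧ IsBeh1 R ∧ ∀ x y z a b c, P x y z a b c = Q y z b c * R x a) ∨
  (∃ Q R, IsBeh2 Q ∧ IsBeh1 R ∧ ∀ x y z a b c, P x y z a b c = Q x z a c * R y b)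

/-- A non-signalling bilocal product term: as `BilocTerm3`, but with the two-party factor
required to be non-signalling. -/
def NSBilocTerm3 {X Y Z A B C : Type*} [Fintype A] [Fintype B] [Fintype C]
    (P : X → Y → Z → A → B → C → ℝ) : Prop :=
  (∃ Q R, IsBeh2 Q ∧ IsNS2 Q ∧ IsBeh1 R ∧
      ∀ x y z a b c, P x y z a b c = Q x y a b * R z c) ∨
  (∃ Q R, IsBeh2 Q ∧ IsNS2 Q ∧ IsBeh1 R ∧
      ∀ x y z a b c, P x y z a b c = Q y z b c * R x a) ∨
  (∃ Q R, IsBeh2 Q ∧ IsNS2 Q ∧ IsBeh1 R ∧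
      ∀ x y z a b c, P x y z a b c = Q x z a c * R y b)

/-- A tripartite general bilocal behaviour: a convex combination of bilocal product terms
(no non-signalling restriction). -/
def IsGenBiloc3 {X Y Z A B C : Type*} [Fintype A] [Fintype B] [Fintype C]
    (P : X → Y → Z → A → B → C → ℝ) : Prop :=
  ∃ (m : ℕ) (p : Fin m → ℝ) (Ps : Fin m → X → Y → Z → A → B → C → ℝ),
    (∀ j, 0 ≤ p j) ∧ (∑ j, p j) = 1 ∧ (∀ j, BilocTerm3 (Ps j)) ∧
    ∀ x y z a b c, P x y z a b c = ∑ j, p j * Ps j x y z a b c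

/-- A tripartite non-signalling bilocal behaviour: a convex combination of non-signalling
bilocal product terms. -/
def IsNSBiloc3 {X Y Z A B C : Type*} [Fintype A] [Fintype B] [Fintype C]
    (P : X → Y → Z → A → B → C → ℝ) : Prop :=
  ∃ (m : ℕ) (p : Fin m → ℝ) (Ps : Fin m → X → Y → Z → A → B → C → ℝ),
    (∀ j, 0 ≤ p j) ∧ (∑ j, p j) = 1 ∧ (∀ j, NSBilocTerm3 (Ps j)) ∧
    ∀ x y z a b c, P x y z a b c = ∑ j, p j * Ps j x y z a b c

/-- The value `⟨G, P⟩` of a bipartite Bell functional on a bipartite behaviour. -/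
def val2 {X Y A B : Type*} [Fintype X] [Fintype Y] [Fintype A] [Fintype B]
    (G P : X → Y → A → B → ℝ) : ℝ :=
  ∑ x, ∑ y, ∑ a, ∑ b, G x y a b * P x y a b

/-- The value `⟨G, P⟩` of a tripartite Bell functional on a tripartite behaviour. -/
def val3 {X Y Z A B C : Type*} [Fintype X] [Fintype Y] [Fintype Z]
    [Fintype A] [Fintype B] [Fintype C]
    (G P : X → Y → Z → A → B → C → ℝ) : ℝ :=
  ∑ x, ∑ y, ∑ z, ∑ a, ∑ b, ∑ c, G x y z a b c * P x y z a b c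

/-- `ω_{Q²}(G)`: the bipartite quantum value of `G`. -/
def qVal2 {X Y A B : Type*} [Fintype X] [Fintype Y] [Fintype A] [Fintype B]
    (G : X → Y → A → B → ℝ) : ℝ :=
  sSup {v | ∃ P, IsQBeh2 P ∧ v = val2 G P}

/-- `ω_{L²}(G)`: the bipartite fully local (classical) value of `G`. -/
def lVal2 {X Y A B : Type*} [Fintype X] [Fintype Y] [Fintype A] [Fintype B]
    (G : X → Y → A → B → ℝ) : ℝ :=
  sSup {v | ∃ P, IsLocal2 P ∧ v = val2 G P}

/-- `ω_{Q³}(G)`: the tripartite quantum value of `G`. -/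
def qVal3 {X Y Z A B C : Type*} [Fintype X] [Fintype Y] [Fintype Z]
    [Fintype A] [Fintype B] [Fintype C] (G : X → Y → Z → A → B → C → ℝ) : ℝ :=
  sSup {v | ∃ P, IsQBeh3 P ∧ v = val3 G P}

/-- `ω_{BL³_G}(G)`: the tripartite general bilocal value of `G`. -/
def bVal3 {X Y Z A B C : Type*} [Fintype X] [Fintype Y] [Fintype Z]
    [Fintype A] [Fintype B] [Fintype C] (G : X → Y → Z → A → B → C → ℝ) : ℝ :=
  sSup {v | ∃ P, IsGenBiloc3 P ∧ v = val3 G P}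

/-- `ω_{BL³_NS}(G)`: the tripartite non-signalling bilocal value of `G`. -/
def nsbVal3 {X Y Z A B C : Type*} [Fintype X] [Fintype Y] [Fintype Z]
    [Fintype A] [Fintype B] [Fintype C] (G : X → Y → Z → A → B → C → ℝ) : ℝ :=
  sSup {v | ∃ P, IsNSBiloc3 P ∧ v = val3 G P}

/-- A (generalized) bipartite game: nonnegative coefficients satisfying the normalization
condition `∑_{x,y} max_{a,b} G^{ab}_{xy} ≤ 1`. -/
def IsGame2 {X Y A B : Type*} [Fintype X] [Fintype Y] [Fintype A] [Fintype B]
    (G : X → Y → A → B → ℝ) : Prop :=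
  (∀ x y a b, 0 ≤ G x y a b) ∧ (∑ x, ∑ y, (⨆ a, ⨆ b, G x y a b)) ≤ 1

/-- The tripartite functional `Ĝ` built from three instances of a bipartite functional `G`:
one instance is played by Alice–Bob, one by Alice–Charlie and one by Bob–Charlie, i.e.
`Ĝ^{a₁a₂,b₁b₂,c₁c₂}_{x₁x₂,y₁y₂,z₁z₂} = G^{a₁b₁}_{x₁y₁} G^{a₂c₁}_{x₂z₁} G^{b₂c₂}_{y₂z₂}`. -/
def Ghat {I O : Type*} (G : I → I → O → O → ℝ) :
    I × I → I × I → I × I → O × O → O × O → O × O → ℝ :=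
  fun x y z a b c => G x.1 y.1 a.1 b.1 * G x.2 z.1 a.2 c.1 * G y.2 z.2 b.2 c.2

/-- The two-fold tensor product (parallel repetition) `G^{⊗2}` of a bipartite functional:
coefficients `G^{a₁b₁}_{x₁y₁} G^{a₂b₂}_{x₂y₂}`. -/
def tensor2 {I O : Type*} (G : I → I → O → O → ℝ) :
    I × I → I × I → O × O → O × O → ℝ :=
  fun x y a b => G x.1 y.1 a.1 b.1 * G x.2 y.2 a.2 b.2

/-! ### Auxiliary lemmas -/

section Aux

open Matrix Finset

lemma sum2_mul {R : Type*} [CommSemiring R] {α β : Type*} [Fintype α] [Fintype β]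
    (f : α → R) (g : β → R) :
    ∑ p : α × β, f p.1 * g p.2 = (∑ a, f a) * (∑ b, g b) := by
  rw [Finset.sum_mul_sum]
  exact Fintype.sum_prod_type' (f := fun a b => f a * g b)

lemma sum3_mul {R : Type*} [CommSemiring R] {α β γ : Type*} [Fintype α] [Fintype β] [Fintype γ]
    (f : α → R) (g : β → R) (h : γ → R) :
    ∑ p : α × β × γ, f p.1 * (g p.2.1 * h p.2.2)
      = (∑ a, f a) * ((∑ b, g b) * (∑ c, h c)) := by
  have h1 : ∑ p : α × β × γ, f p.1 * (g p.2.1 * h p.2.2)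
      = (∑ a, f a) * (∑ q : β × γ, g q.1 * h q.2) :=
    sum2_mul f (fun q : β × γ => g q.1 * h q.2)
  rw [h1, sum2_mul g h]

lemma kron_conjT {l m n p : Type*} [Fintype l] [Fintype m] [Fintype n] [Fintype p]
    (A : Matrix l m ℂ) (B : Matrix n p ℂ) : (A ⊗ₖ B)ᴴ = Aᴴ ⊗ₖ Bᴴ := by
  ext i j
  simp [Matrix.conjTranspose_apply, Matrix.kroneckerMap_apply]

lemma kron_psd {m n : Type*} [Fintype m] [Fintype n] [DecidableEq m] [DecidableEq n]
    {A : Matrix m m ℂ} {B : Matrix n n ℂ} (hA : A.PosSemidef) (hB : B.PosSemidef) :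
    (A ⊗ₖ B).PosSemidef := by
  exact hA.kronecker hB

lemma form_eq_dot {n : Type*} [Fintype n] (M : Matrix n n ℂ) (ψ : n → ℂ) :
    ∑ i, ∑ j, (starRingEnd ℂ) (ψ i) * M i j * ψ j = star ψ ⬝ᵥ M *ᵥ ψ := by
  simp [dotProduct, Matrix.mulVec, Finset.mul_sum, mul_assoc, Pi.star_apply,
    RCLike.star_def]

lemma sum_swap₃ {M : Type*} [AddCommMonoid M] {τ ι κ : Type*} [Fintype τ] [Fintype ι]
    [Fintype κ] (f : τ → ι → κ → M) :
    ∑ t, ∑ i, ∑ j, f t i j = ∑ i, ∑ j, ∑ t, f t i j := by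
  rw [Finset.sum_comm]
  exact Finset.sum_congr rfl fun i _ => Finset.sum_comm

lemma val2_flat {X Y A B : Type*} [Fintype X] [Fintype Y] [Fintype A] [Fintype B]
    (G P : X → Y → A → B → ℝ) :
    val2 G P = ∑ u : X × Y × A × B,
      G u.1 u.2.1 u.2.2.1 u.2.2.2 * P u.1 u.2.1 u.2.2.1 u.2.2.2 := by
  simp [val2, Fintype.sum_prod_type]

lemma val3_flat {X Y Z A B C : Type*} [Fintype X] [Fintype Y] [Fintype Z]
    [Fintype A] [Fintype B] [Fintype C] (G P : X → Y → Z → A → B → C → ℝ) :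
    val3 G P = ∑ u : X × Y × Z × A × B × C,
      G u.1 u.2.1 u.2.2.1 u.2.2.2.1 u.2.2.2.2.1 u.2.2.2.2.2
      * P u.1 u.2.1 u.2.2.1 u.2.2.2.1 u.2.2.2.2.1 u.2.2.2.2.2 := by
  simp [val3, Fintype.sum_prod_type]

lemma val3_pair {X Y Z A B C : Type*} [Fintype X] [Fintype Y] [Fintype Z]
    [Fintype A] [Fintype B] [Fintype C] (G P : X → Y → Z → A → B → C → ℝ) :
    val3 G P = ∑ s : X × Y × Z, ∑ t : A × B × C,
      G s.1 s.2.1 s.2.2 t.1 t.2.1 t.2.2 * P s.1 s.2.1 s.2.2 t.1 t.2.1 t.2.2 := by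
  simp [val3, Fintype.sum_prod_type]

lemma qbeh3_props {X Y Z A B C : Type*} [Fintype A] [Fintype B] [Fintype C]
    {P : X → Y → Z → A → B → C → ℝ} (h : IsQBeh3 P) :
    (∀ x y z a b c, 0 ≤ P x y z a b c) ∧
    (∀ x y z, ∑ t : A × B × C, P x y z t.1 t.2.1 t.2.2 = 1) := by
  obtain ⟨d₁, d₂, d₃, ψ, E, F, Gm, hψ, hE, hF, hGm, hid⟩ := h
  constructor
  · intro x y z a b c
    have hpsd := kron_psd ((hE x).1 a) (kron_psd ((hF y).1 b) ((hGm z).1 c))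
    have hd : (0 : ℂ) ≤ star ψ ⬝ᵥ (E x a ⊗ₖ (F y b ⊗ₖ Gm z c)) *ᵥ ψ := hpsd.dotProduct_mulVec_nonneg ψ
    have he : ((P x y z a b c : ℝ) : ℂ)
        = star ψ ⬝ᵥ (E x a ⊗ₖ (F y b ⊗ₖ Gm z c)) *ᵥ ψ :=
      (hid x y z a b c).trans (form_eq_dot _ _)
    exact Complex.zero_le_real.mp (he ▸ hd)
  · intro x y z
    have hM : ∑ t : A × B × C, (E x t.1 ⊗ₖ (F y t.2.1 ⊗ₖ Gm z t.2.2)) = 1 := by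
      ext i j
      rw [Matrix.sum_apply]
      calc ∑ t : A × B × C, (E x t.1 ⊗ₖ (F y t.2.1 ⊗ₖ Gm z t.2.2)) i j
          = ∑ t : A × B × C, E x t.1 i.1 j.1
              * (F y t.2.1 i.2.1 j.2.1 * Gm z t.2.2 i.2.2 j.2.2) := by
            refine Finset.sum_congr rfl fun t _ => ?_
            simp [Matrix.kroneckerMap_apply]
        _ = (∑ a, E x a i.1 j.1)
              * ((∑ b, F y b i.2.1 j.2.1) * (∑ c, Gm z c i.2.2 j.2.2)) :=
            sum3_mul (fun a => E x a i.1 j.1) (fun b => F y b i.2.1 j.2.1)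
              (fun c => Gm z c i.2.2 j.2.2)
        _ = (∑ a, E x a) i.1 j.1
              * ((∑ b, F y b) i.2.1 j.2.1 * (∑ c, Gm z c) i.2.2 j.2.2) := by
            simp [Matrix.sum_apply]
        _ = (1 : Matrix _ _ ℂ) i j := by
            rw [(hE x).2, (hF y).2, (hGm z).2]
            rcases i with ⟨i1, i2, i3⟩
            rcases j with ⟨j1, j2, j3⟩
            simp [Matrix.one_apply, Prod.ext_iff]
            split_ifs <;> simp_all
    have hC : ∑ t : A × B × C, ((P x y z t.1 t.2.1 t.2.2 : ℝ) : ℂ) = 1 := by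
      calc ∑ t : A × B × C, ((P x y z t.1 t.2.1 t.2.2 : ℝ) : ℂ)
          = ∑ t : A × B × C, ∑ i, ∑ j, (starRingEnd ℂ) (ψ i)
              * ((E x t.1 ⊗ₖ (F y t.2.1 ⊗ₖ Gm z t.2.2)) i j) * ψ j :=
            Finset.sum_congr rfl fun t _ => hid x y z t.1 t.2.1 t.2.2
        _ = ∑ i, ∑ j, ∑ t : A × B × C, (starRingEnd ℂ) (ψ i)
              * ((E x t.1 ⊗ₖ (F y t.2.1 ⊗ₖ Gm z t.2.2)) i j) * ψ j := sum_swap₃ _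
        _ = ∑ i, ∑ j, (starRingEnd ℂ) (ψ i)
              * ((∑ t : A × B × C, (E x t.1 ⊗ₖ (F y t.2.1 ⊗ₖ Gm z t.2.2))) i j) * ψ j := by
            refine Finset.sum_congr rfl fun i _ => Finset.sum_congr rfl fun j _ => ?_
            rw [Matrix.sum_apply]
            simp [Finset.mul_sum, Finset.sum_mul]
        _ = ∑ i, ∑ j, (starRingEnd ℂ) (ψ i) * ((1 : Matrix _ _ ℂ) i j) * ψ j := by rw [hM]
        _ = ∑ i, (starRingEnd ℂ) (ψ i) * ψ i := by
            refine Finset.sum_congr rfl fun i _ => ?_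
            simp [Matrix.one_apply, mul_ite, ite_mul]
        _ = ((1 : ℝ) : ℂ) := by
            rw [← hψ]
            push_cast
            refine Finset.sum_congr rfl fun i _ => ?_
            rw [mul_comm, Complex.mul_conj]
    exact_mod_cast hC


lemma sum_unpair {M : Type*} [AddCommMonoid M] {α β : Type*} [Fintype α] [Fintype β]
    (f : α → β → M) :
    ∑ a, ∑ b, f a b = ∑ p : α × β, f p.1 p.2 :=
  (Fintype.sum_prod_type' (f := f)).symm

/-- `((a,b),(c,d),(e,f)) ↦ ((a,c),(b,e),(d,f))` : regroups three "copy" pairs into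
per-party pairs. -/
def pairTripEquiv {α₁ α₂ β₁ β₂ γ₁ γ₂ : Type*} :
    ((α₁ × β₁) × (α₂ × γ₁) × (β₂ × γ₂)) ≃ ((α₁ × α₂) × (β₁ × β₂) × (γ₁ × γ₂)) where
  toFun w := ((w.1.1, w.2.1.1), (w.1.2, w.2.2.1), (w.2.1.2, w.2.2.2))
  invFun p := ((p.1.1, p.2.1.1), (p.1.2, p.2.2.1), (p.2.1.2, p.2.2.2))
  left_inv := fun ⟨⟨_,_⟩,⟨_,_⟩,⟨_,_⟩⟩ => rfl
  right_inv := fun ⟨⟨_,_⟩,⟨_,_⟩,⟨_,_⟩⟩ => rfl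

def zipTripEquiv {α α' β β' γ γ' : Type*} :
    ((α × α') × (β × β') × (γ × γ')) ≃ ((α × β × γ) × (α' × β' × γ')) where
  toFun w := ((w.1.1, w.2.1.1, w.2.2.1), (w.1.2, w.2.1.2, w.2.2.2))
  invFun p := ((p.1.1, p.2.1), (p.1.2.1, p.2.2.1), (p.1.2.2, p.2.2.2))
  left_inv := fun ⟨⟨_,_⟩,⟨_,_⟩,⟨_,_⟩⟩ => rfl
  right_inv := fun ⟨⟨_,_,_⟩,⟨_,_,_⟩⟩ => rfl

def cubeEquiv {I O : Type*} :
    ((I × I × O × O) × (I × I × O × O) × (I × I × O × O))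
      ≃ ((I × I) × (I × I) × (I × I) × (O × O) × (O × O) × (O × O)) where
  toFun w := ((w.1.1, w.2.1.1), (w.1.2.1, w.2.2.1), (w.2.1.2.1, w.2.2.2.1),
    (w.1.2.2.1, w.2.1.2.2.1), (w.1.2.2.2, w.2.2.2.2.1), (w.2.1.2.2.2, w.2.2.2.2.2))
  invFun p := ((p.1.1, p.2.1.1, p.2.2.2.1.1, p.2.2.2.2.1.1),
    (p.1.2, p.2.2.1.1, p.2.2.2.1.2, p.2.2.2.2.2.1),
    (p.2.1.2, p.2.2.1.2, p.2.2.2.2.1.2, p.2.2.2.2.2.2))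
  left_inv := fun ⟨⟨_,_,_,_⟩,⟨_,_,_,_⟩,⟨_,_,_,_⟩⟩ => rfl
  right_inv := fun ⟨⟨_,_⟩,⟨_,_⟩,⟨_,_⟩,⟨_,_⟩,⟨_,_⟩,⟨_,_⟩⟩ => rfl

lemma one_entry_mul {m n : Type*} [DecidableEq m] [DecidableEq n] (i j : m × n) :
    (1 : Matrix m m ℂ) i.1 j.1 * (1 : Matrix n n ℂ) i.2 j.2
      = (1 : Matrix (m × n) (m × n) ℂ) i j := by
  rcases i with ⟨i1, i2⟩
  rcases j with ⟨j1, j2⟩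
  simp only [Matrix.one_apply, Prod.ext_iff]
  split_ifs <;> simp_all

lemma povm_kron_sub {dA dB d : ℕ} {A B : Type*} [Fintype A] [Fintype B]
    {E : A → Matrix (Fin dA) (Fin dA) ℂ} {F : B → Matrix (Fin dB) (Fin dB) ℂ}
    (hE : IsPOVM E) (hF : IsPOVM F) (e : Fin d → Fin dA × Fin dB) (he : Function.Bijective e) :
    IsPOVM (fun p : A × B => (E p.1 ⊗ₖ F p.2).submatrix e e) := by
  constructor
  · exact fun p => (kron_psd (hE.1 p.1) (hF.1 p.2)).submatrix e
  · have h1 : ∑ p : A × B, (E p.1 ⊗ₖ F p.2) = 1 := by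
      ext i j
      rw [Matrix.sum_apply]
      calc ∑ p : A × B, (E p.1 ⊗ₖ F p.2) i j
          = ∑ p : A × B, E p.1 i.1 j.1 * F p.2 i.2 j.2 := by
            refine Finset.sum_congr rfl fun p _ => ?_
            simp [Matrix.kroneckerMap_apply]
        _ = (∑ a, E a i.1 j.1) * (∑ b, F b i.2 j.2) :=
            sum2_mul (fun a => E a i.1 j.1) (fun b => F b i.2 j.2)
        _ = (∑ a, E a) i.1 j.1 * (∑ b, F b) i.2 j.2 := by simp [Matrix.sum_apply]
        _ = (1 : Matrix _ _ ℂ) i j := by rw [hE.2, hF.2]; exact one_entry_mul i j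
    have h2 : ∑ p : A × B, (E p.1 ⊗ₖ F p.2).submatrix e e
        = (∑ p : A × B, (E p.1 ⊗ₖ F p.2)).submatrix e e := by
      ext i j
      simp [Matrix.sum_apply, Matrix.submatrix_apply]
    rw [h2, h1]
    exact Matrix.submatrix_one_equiv (Equiv.ofBijective e he)

lemma qbeh3_construct {N K : ℕ} {P₂ : Fin N → Fin N → Fin K → Fin K → ℝ} (h : IsQBeh2 P₂) :
    IsQBeh3 (fun (x y z : Fin N × Fin N) (a b c : Fin K × Fin K) =>
      P₂ x.1 y.1 a.1 b.1 * P₂ x.2 z.1 a.2 c.1 * P₂ y.2 z.2 b.2 c.2) := by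
  obtain ⟨d₁, d₂, ψ, E, F, hψ, hE, hF, hid⟩ := h
  have eA : Fin d₁ × Fin d₁ ≃ Fin (d₁ * d₁) := finProdFinEquiv
  have eB : Fin d₂ × Fin d₁ ≃ Fin (d₂ * d₁) := finProdFinEquiv
  have eC : Fin d₂ × Fin d₂ ≃ Fin (d₂ * d₂) := finProdFinEquiv
  refine ⟨d₁ * d₁, d₂ * d₁, d₂ * d₂,
    fun p => ψ ((eA.symm p.1).1, (eB.symm p.2.1).1)
      * ψ ((eA.symm p.1).2, (eC.symm p.2.2).1)
      * ψ ((eB.symm p.2.1).2, (eC.symm p.2.2).2),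
    fun x a => (E x.1 a.1 ⊗ₖ E x.2 a.2).submatrix eA.symm eA.symm,
    fun y b => (F y.1 b.1 ⊗ₖ E y.2 b.2).submatrix eB.symm eB.symm,
    fun z c => (F z.1 c.1 ⊗ₖ F z.2 c.2).submatrix eC.symm eC.symm,
    ?_, ?_, ?_, ?_, ?_⟩
  · -- norm
    rw [← Fintype.sum_equiv (pairTripEquiv.trans (eA.prodCongr (eB.prodCongr eC)))
      (fun w => Complex.normSq (ψ w.1) * (Complex.normSq (ψ w.2.1) * Complex.normSq (ψ w.2.2)))
      _ (fun w => ?_)]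
    · rw [sum3_mul (fun u => Complex.normSq (ψ u)) (fun u => Complex.normSq (ψ u))
        (fun u => Complex.normSq (ψ u)), hψ]
      norm_num
    · rcases w with ⟨⟨i₁, j₁⟩, ⟨i₂, k₁⟩, ⟨j₂, k₂⟩⟩
      simp only [pairTripEquiv, Equiv.trans_apply, Equiv.prodCongr_apply, Equiv.coe_fn_mk,
        Prod.map, Equiv.symm_apply_apply, Complex.normSq_mul]
      ring
  · exact fun x => povm_kron_sub (hE x.1) (hE x.2) eA.symm (eA.symm.bijective)
  · exact fun y => povm_kron_sub (hF y.1) (hE y.2) eB.symm (eB.symm.bijective)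
  · exact fun z => povm_kron_sub (hF z.1) (hF z.2) eC.symm (eC.symm.bijective)
  · intro x y z a b c
    push_cast
    rw [sum_unpair]
    have h₁ : ((P₂ x.1 y.1 a.1 b.1 : ℝ) : ℂ)
        = ∑ q : (Fin d₁ × Fin d₂) × (Fin d₁ × Fin d₂),
            (starRingEnd ℂ) (ψ q.1) * ((E x.1 a.1 ⊗ₖ F y.1 b.1) q.1 q.2) * ψ q.2 :=
      (hid x.1 y.1 a.1 b.1).trans (sum_unpair _)
    have h₂ : ((P₂ x.2 z.1 a.2 c.1 : ℝ) : ℂ)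
        = ∑ q : (Fin d₁ × Fin d₂) × (Fin d₁ × Fin d₂),
            (starRingEnd ℂ) (ψ q.1) * ((E x.2 a.2 ⊗ₖ F z.1 c.1) q.1 q.2) * ψ q.2 :=
      (hid x.2 z.1 a.2 c.1).trans (sum_unpair _)
    have h₃ : ((P₂ y.2 z.2 b.2 c.2 : ℝ) : ℂ)
        = ∑ q : (Fin d₁ × Fin d₂) × (Fin d₁ × Fin d₂),
            (starRingEnd ℂ) (ψ q.1) * ((E y.2 b.2 ⊗ₖ F z.2 c.2) q.1 q.2) * ψ q.2 :=
      (hid y.2 z.2 b.2 c.2).trans (sum_unpair _)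
    calc ((P₂ x.1 y.1 a.1 b.1 : ℝ) : ℂ) * (P₂ x.2 z.1 a.2 c.1 : ℝ) * (P₂ y.2 z.2 b.2 c.2 : ℝ)
        = (∑ q : (Fin d₁ × Fin d₂) × (Fin d₁ × Fin d₂),
            (starRingEnd ℂ) (ψ q.1) * ((E x.1 a.1 ⊗ₖ F y.1 b.1) q.1 q.2) * ψ q.2)
          * ((∑ q : (Fin d₁ × Fin d₂) × (Fin d₁ × Fin d₂),
            (starRingEnd ℂ) (ψ q.1) * ((E x.2 a.2 ⊗ₖ F z.1 c.1) q.1 q.2) * ψ q.2)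
          * (∑ q : (Fin d₁ × Fin d₂) × (Fin d₁ × Fin d₂),
            (starRingEnd ℂ) (ψ q.1) * ((E y.2 b.2 ⊗ₖ F z.2 c.2) q.1 q.2) * ψ q.2)) := by
          rw [h₁, h₂, h₃]; ring
      _ = ∑ w : ((Fin d₁ × Fin d₂) × (Fin d₁ × Fin d₂)) × ((Fin d₁ × Fin d₂) × (Fin d₁ × Fin d₂))
            × ((Fin d₁ × Fin d₂) × (Fin d₁ × Fin d₂)),
          ((starRingEnd ℂ) (ψ w.1.1) * ((E x.1 a.1 ⊗ₖ F y.1 b.1) w.1.1 w.1.2) * ψ w.1.2)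
          * (((starRingEnd ℂ) (ψ w.2.1.1) * ((E x.2 a.2 ⊗ₖ F z.1 c.1) w.2.1.1 w.2.1.2) * ψ w.2.1.2)
          * ((starRingEnd ℂ) (ψ w.2.2.1) * ((E y.2 b.2 ⊗ₖ F z.2 c.2) w.2.2.1 w.2.2.2) * ψ w.2.2.2)) :=
          (sum3_mul _ _ _).symm
      _ = _ := by
          refine Fintype.sum_equiv (zipTripEquiv.trans (Equiv.prodCongr
            (pairTripEquiv.trans (eA.prodCongr (eB.prodCongr eC)))
            (pairTripEquiv.trans (eA.prodCongr (eB.prodCongr eC))))) _ _ fun w => ?_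
          rcases w with ⟨⟨⟨i₁, j₁⟩, ⟨i₁', j₁'⟩⟩, ⟨⟨i₂, k₁⟩, ⟨i₂', k₁'⟩⟩, ⟨⟨j₂, k₂⟩, ⟨j₂', k₂'⟩⟩⟩
          simp only [zipTripEquiv, pairTripEquiv, Equiv.trans_apply, Equiv.prodCongr_apply,
            Equiv.coe_fn_mk, Prod.map, Matrix.submatrix_apply, Matrix.kroneckerMap_apply,
            Equiv.symm_apply_apply, _root_.map_mul]
          ring

lemma val3_ghat_cube {N K : ℕ} (G P₂ : Fin N → Fin N → Fin K → Fin K → ℝ) :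
    val3 (Ghat G) (fun x y z a b c =>
        P₂ x.1 y.1 a.1 b.1 * P₂ x.2 z.1 a.2 c.1 * P₂ y.2 z.2 b.2 c.2)
      = val2 G P₂ * (val2 G P₂ * val2 G P₂) := by
  rw [val3_flat, val2_flat]
  rw [← sum3_mul
    (fun u : Fin N × Fin N × Fin K × Fin K =>
      G u.1 u.2.1 u.2.2.1 u.2.2.2 * P₂ u.1 u.2.1 u.2.2.1 u.2.2.2)
    (fun u : Fin N × Fin N × Fin K × Fin K =>
      G u.1 u.2.1 u.2.2.1 u.2.2.2 * P₂ u.1 u.2.1 u.2.2.1 u.2.2.2)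
    (fun u : Fin N × Fin N × Fin K × Fin K =>
      G u.1 u.2.1 u.2.2.1 u.2.2.2 * P₂ u.1 u.2.1 u.2.2.1 u.2.2.2)]
  refine (Fintype.sum_equiv cubeEquiv _ _ fun w => ?_).symm
  rcases w with ⟨⟨x₁, y₁, a₁, b₁⟩, ⟨x₂, z₁, a₂, c₁⟩, ⟨y₂, z₂, b₂, c₂⟩⟩
  simp only [cubeEquiv, Equiv.coe_fn_mk, Ghat]
  ring


lemma val3_ghat_le {N K : ℕ} {G : Fin N → Fin N → Fin K → Fin K → ℝ} {M : Fin N → Fin N → ℝ}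
    (hG0 : ∀ x y a b, 0 ≤ G x y a b)
    (hGM : ∀ x y a b, G x y a b ≤ M x y)
    (hM0 : ∀ x y, 0 ≤ M x y)
    (hS1 : ∑ p : Fin N × Fin N, M p.1 p.2 ≤ 1)
    {P : Fin N × Fin N → Fin N × Fin N → Fin N × Fin N
      → Fin K × Fin K → Fin K × Fin K → Fin K × Fin K → ℝ}
    (hP0 : ∀ x y z a b c, 0 ≤ P x y z a b c)
    (hPs : ∀ x y z, ∑ t : (Fin K × Fin K) × (Fin K × Fin K) × (Fin K × Fin K),
      P x y z t.1 t.2.1 t.2.2 = 1) :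
    val3 (Ghat G) P ≤ 1 := by
  have hS0 : 0 ≤ ∑ p : Fin N × Fin N, M p.1 p.2 := Finset.sum_nonneg fun p _ => hM0 _ _
  rw [val3_pair]
  have hstep : ∀ s : (Fin N × Fin N) × (Fin N × Fin N) × (Fin N × Fin N),
      (∑ t : (Fin K × Fin K) × (Fin K × Fin K) × (Fin K × Fin K),
        Ghat G s.1 s.2.1 s.2.2 t.1 t.2.1 t.2.2 * P s.1 s.2.1 s.2.2 t.1 t.2.1 t.2.2)
      ≤ M s.1.1 s.2.1.1 * (M s.1.2 s.2.2.1 * M s.2.1.2 s.2.2.2) := by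
    intro s
    calc (∑ t : (Fin K × Fin K) × (Fin K × Fin K) × (Fin K × Fin K),
          Ghat G s.1 s.2.1 s.2.2 t.1 t.2.1 t.2.2 * P s.1 s.2.1 s.2.2 t.1 t.2.1 t.2.2)
        ≤ ∑ t : (Fin K × Fin K) × (Fin K × Fin K) × (Fin K × Fin K),
          (M s.1.1 s.2.1.1 * (M s.1.2 s.2.2.1 * M s.2.1.2 s.2.2.2))
            * P s.1 s.2.1 s.2.2 t.1 t.2.1 t.2.2 := by
          refine Finset.sum_le_sum fun t _ => ?_
          refine mul_le_mul_of_nonneg_right ?_ (hP0 _ _ _ _ _ _)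
          have h1 : G s.1.1 s.2.1.1 t.1.1 t.2.1.1 * G s.1.2 s.2.2.1 t.1.2 t.2.2.1
              * G s.2.1.2 s.2.2.2 t.2.1.2 t.2.2.2
              ≤ M s.1.1 s.2.1.1 * M s.1.2 s.2.2.1 * M s.2.1.2 s.2.2.2 :=
            mul_le_mul (mul_le_mul (hGM _ _ _ _) (hGM _ _ _ _) (hG0 _ _ _ _) (hM0 _ _))
              (hGM _ _ _ _) (hG0 _ _ _ _) (mul_nonneg (hM0 _ _) (hM0 _ _))
          calc Ghat G s.1 s.2.1 s.2.2 t.1 t.2.1 t.2.2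
              ≤ M s.1.1 s.2.1.1 * M s.1.2 s.2.2.1 * M s.2.1.2 s.2.2.2 := h1
            _ = M s.1.1 s.2.1.1 * (M s.1.2 s.2.2.1 * M s.2.1.2 s.2.2.2) := by ring
      _ = (M s.1.1 s.2.1.1 * (M s.1.2 s.2.2.1 * M s.2.1.2 s.2.2.2))
            * ∑ t : (Fin K × Fin K) × (Fin K × Fin K) × (Fin K × Fin K),
              P s.1 s.2.1 s.2.2 t.1 t.2.1 t.2.2 := by rw [← Finset.mul_sum]
      _ = M s.1.1 s.2.1.1 * (M s.1.2 s.2.2.1 * M s.2.1.2 s.2.2.2) := by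
            rw [hPs]; ring
  calc (∑ s : (Fin N × Fin N) × (Fin N × Fin N) × (Fin N × Fin N),
        ∑ t : (Fin K × Fin K) × (Fin K × Fin K) × (Fin K × Fin K),
          Ghat G s.1 s.2.1 s.2.2 t.1 t.2.1 t.2.2 * P s.1 s.2.1 s.2.2 t.1 t.2.1 t.2.2)
      ≤ ∑ s : (Fin N × Fin N) × (Fin N × Fin N) × (Fin N × Fin N),
          M s.1.1 s.2.1.1 * (M s.1.2 s.2.2.1 * M s.2.1.2 s.2.2.2) :=
        Finset.sum_le_sum fun s _ => hstep s
    _ = (∑ p : Fin N × Fin N, M p.1 p.2) * ((∑ p : Fin N × Fin N, M p.1 p.2)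
          * (∑ p : Fin N × Fin N, M p.1 p.2)) := by
        rw [← sum3_mul (fun p : Fin N × Fin N => M p.1 p.2) (fun p : Fin N × Fin N => M p.1 p.2)
          (fun p : Fin N × Fin N => M p.1 p.2)]
        exact (Fintype.sum_equiv pairTripEquiv _ _
          (fun ⟨⟨_, _⟩, ⟨_, _⟩, ⟨_, _⟩⟩ => rfl)).symm
    _ ≤ 1 := by nlinarith

lemma local_isBeh {X Y A B : Type*} [Fintype A] [Fintype B] {P : X → Y → A → B → ℝ}
    (h : IsLocal2 P) :
    (∀ x y a b, 0 ≤ P x y a b) ∧ (∀ x y, ∑ a, ∑ b, P x y a b = 1) := by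
  obtain ⟨m, p, Q, R, hp0, hp1, hQ, hR, heq⟩ := h
  constructor
  · intro x y a b
    rw [heq]
    exact Finset.sum_nonneg fun j _ =>
      mul_nonneg (mul_nonneg (hp0 j) ((hQ j).1 x a)) ((hR j).1 y b)
  · intro x y
    calc ∑ a, ∑ b, P x y a b = ∑ a, ∑ b, ∑ j, p j * Q j x a * R j y b := by
          simp only [heq]
      _ = ∑ j, ∑ a, ∑ b, p j * Q j x a * R j y b :=
          (sum_swap₃ fun j a b => p j * Q j x a * R j y b).symm
      _ = ∑ j, p j * ((∑ a, Q j x a) * (∑ b, R j y b)) := by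
          refine Finset.sum_congr rfl fun j _ => ?_
          rw [Finset.sum_mul_sum, Finset.mul_sum]
          refine Finset.sum_congr rfl fun a _ => ?_
          rw [Finset.mul_sum]
          exact Finset.sum_congr rfl fun b _ => by ring
      _ = ∑ j, p j := Finset.sum_congr rfl fun j _ => by rw [(hQ j).2, (hR j).2]; ring
      _ = 1 := hp1

lemma val2_le_of_beh {N K : ℕ} {G : Fin N → Fin N → Fin K → Fin K → ℝ} {M : Fin N → Fin N → ℝ}
    (hGM : ∀ x y a b, G x y a b ≤ M x y)
    (hS1 : ∑ p : Fin N × Fin N, M p.1 p.2 ≤ 1)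
    {P : Fin N → Fin N → Fin K → Fin K → ℝ}
    (hP0 : ∀ x y a b, 0 ≤ P x y a b)
    (hPs : ∀ x y, ∑ a, ∑ b, P x y a b = 1) :
    val2 G P ≤ 1 := by
  have h1 : val2 G P ≤ ∑ x, ∑ y, M x y := by
    rw [val2]
    refine Finset.sum_le_sum fun x _ => Finset.sum_le_sum fun y _ => ?_
    calc (∑ a, ∑ b, G x y a b * P x y a b)
        ≤ ∑ a, ∑ b, M x y * P x y a b :=
          Finset.sum_le_sum fun a _ => Finset.sum_le_sum fun b _ =>
            mul_le_mul_of_nonneg_right (hGM _ _ _ _) (hP0 _ _ _ _)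
      _ = M x y * ∑ a, ∑ b, P x y a b := by simp [Finset.mul_sum]
      _ = M x y := by rw [hPs]; ring
  exact h1.trans (le_of_eq_of_le (sum_unpair fun x y => M x y) hS1)

/-- Equiv used for the `AB|C` bilocal bound. -/
def bilocEquiv₁ {I O : Type*} :
    (((I × I) × (I × I)) × ((I × I × O × O) × O × (O × O) × O))
      ≃ ((I × I) × (I × I) × (I × I) × (O × O) × (O × O) × (O × O)) where
  toFun w :=
    ((w.1.1.1, w.1.2.1), (w.1.1.2, w.2.1.1), (w.1.2.2, w.2.1.2.1),
      w.2.2.2.1, (w.2.2.2.2, w.2.1.2.2.1), (w.2.2.1, w.2.1.2.2.2))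
  invFun u :=
    (((u.1.1, u.2.1.1), (u.1.2, u.2.2.1.1)),
      ((u.2.1.2, u.2.2.1.2, u.2.2.2.2.1.2, u.2.2.2.2.2.2),
        (u.2.2.2.2.2.1, (u.2.2.2.1, u.2.2.2.2.1.1))))
  left_inv := fun ⟨⟨⟨_,_⟩,⟨_,_⟩⟩, ⟨⟨_,_,_,_⟩, _, ⟨_,_⟩⟩⟩ => rfl
  right_inv := fun ⟨⟨_,_⟩,⟨_,_⟩,⟨_,_⟩,_,⟨_,_⟩,⟨_,_⟩⟩ => rfl

/-- Equiv used for the `BC|A` bilocal bound. -/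
def bilocEquiv₂ {I O : Type*} :
    (((I × I) × (I × I)) × ((I × I × O × O) × (O × O × O) × O))
      ≃ ((I × I) × (I × I) × (I × I) × (O × O) × (O × O) × (O × O)) where
  toFun w :=
    ((w.2.1.1, w.1.1.1), (w.2.1.2.1, w.1.2.1), (w.1.1.2, w.1.2.2),
      (w.2.1.2.2.1, w.2.2.2), (w.2.1.2.2.2, w.2.2.1.1), (w.2.2.1.2.1, w.2.2.1.2.2))
  invFun u :=
    (((u.1.2, u.2.2.1.1), (u.2.1.2, u.2.2.1.2)),
      ((u.1.1, u.2.1.1, u.2.2.2.1.1, u.2.2.2.2.1.1),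
        ((u.2.2.2.2.1.2, u.2.2.2.2.2.1, u.2.2.2.2.2.2), u.2.2.2.1.2)))
  left_inv := fun ⟨⟨⟨_,_⟩,⟨_,_⟩⟩, ⟨⟨_,_,_,_⟩, ⟨_,_,_⟩, _⟩⟩ => rfl
  right_inv := fun ⟨⟨_,_⟩,⟨_,_⟩,⟨_,_⟩,⟨_,_⟩,⟨_,_⟩,⟨_,_⟩⟩ => rfl

/-- Equiv used for the `AC|B` bilocal bound. -/
def bilocEquiv₃ {I O : Type*} :
    (((I × I) × (I × I)) × ((I × I × O × O) × O × O × O × O))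
      ≃ ((I × I) × (I × I) × (I × I) × (O × O) × (O × O) × (O × O)) where
  toFun w :=
    ((w.2.1.1, w.1.1.1), (w.2.1.2.1, w.1.2.1), (w.1.1.2, w.1.2.2),
      (w.2.1.2.2.1, w.2.2.2.1), (w.2.1.2.2.2, w.2.2.1), (w.2.2.2.2.1, w.2.2.2.2.2))
  invFun u :=
    (((u.1.2, u.2.2.1.1), (u.2.1.2, u.2.2.1.2)),
      ((u.1.1, u.2.1.1, u.2.2.2.1.1, u.2.2.2.2.1.1),
        (u.2.2.2.2.1.2, u.2.2.2.1.2, u.2.2.2.2.2.1, u.2.2.2.2.2.2)))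
  left_inv := fun ⟨⟨⟨_,_⟩,⟨_,_⟩⟩, ⟨⟨_,_,_,_⟩, _, _, _, _⟩⟩ => rfl
  right_inv := fun ⟨⟨_,_⟩,⟨_,_⟩,⟨_,_⟩,⟨_,_⟩,⟨_,_⟩,⟨_,_⟩⟩ => rfl


set_option maxHeartbeats 3200000 in
lemma biloc_val_le₁ {N K : ℕ} {G : Fin N → Fin N → Fin K → Fin K → ℝ} {M : Fin N → Fin N → ℝ}
    {lv : ℝ}
    (hG0 : ∀ x y a b, 0 ≤ G x y a b)
    (hGM : ∀ x y a b, G x y a b ≤ M x y)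
    (hM0 : ∀ x y, 0 ≤ M x y)
    (hS1 : ∑ p : Fin N × Fin N, M p.1 p.2 ≤ 1)
    (hlv0 : 0 ≤ lv)
    (hloc : ∀ P' : Fin N → Fin N → Fin K → Fin K → ℝ, IsLocal2 P' → val2 G P' ≤ lv)
    {Q : Fin N × Fin N → Fin N × Fin N → Fin K × Fin K → Fin K × Fin K → ℝ}
    {R : Fin N × Fin N → Fin K × Fin K → ℝ}
    (hQ : IsBeh2 Q) (hR : IsBeh1 R) :
    val3 (Ghat G) (fun x y z a b c => Q x y a b * R z c) ≤ lv := by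
  have hS0 : 0 ≤ ∑ p : Fin N × Fin N, M p.1 p.2 := Finset.sum_nonneg fun p _ => hM0 _ _
  have hLloc : ∀ q : (Fin N × Fin N) × (Fin N × Fin N), IsLocal2 (fun y₂ z₂ b₂ c₂ =>
      (∑ s : (Fin K × Fin K) × Fin K, Q (q.1.1, q.2.1) (q.1.2, y₂) s.1 (s.2, b₂))
      * (∑ c₁, R (q.2.2, z₂) (c₁, c₂))) := by
    intro q
    refine ⟨1, fun _ => 1,
      fun _ y₂ b₂ => ∑ s : (Fin K × Fin K) × Fin K, Q (q.1.1, q.2.1) (q.1.2, y₂) s.1 (s.2, b₂),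
      fun _ z₂ c₂ => ∑ c₁, R (q.2.2, z₂) (c₁, c₂),
      fun _ => zero_le_one, by simp, ?_, ?_, fun y z b c => by simp⟩
    · refine fun j => ⟨fun y₂ b₂ => Finset.sum_nonneg fun s _ => hQ.1 _ _ _ _, fun y₂ => ?_⟩
      calc (∑ b₂, ∑ s : (Fin K × Fin K) × Fin K, Q (q.1.1, q.2.1) (q.1.2, y₂) s.1 (s.2, b₂))
          = ∑ b₂, ∑ a : Fin K × Fin K, ∑ b₁, Q (q.1.1, q.2.1) (q.1.2, y₂) a (b₁, b₂) := by
            simp only [Fintype.sum_prod_type]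
        _ = ∑ a : Fin K × Fin K, ∑ b₂, ∑ b₁, Q (q.1.1, q.2.1) (q.1.2, y₂) a (b₁, b₂) :=
            Finset.sum_comm
        _ = ∑ a : Fin K × Fin K, ∑ b₁, ∑ b₂, Q (q.1.1, q.2.1) (q.1.2, y₂) a (b₁, b₂) :=
            Finset.sum_congr rfl fun a _ => Finset.sum_comm
        _ = 1 := by simpa only [Fintype.sum_prod_type] using hQ.2 (q.1.1, q.2.1) (q.1.2, y₂)
    · refine fun j => ⟨fun z₂ c₂ => Finset.sum_nonneg fun c₁ _ => hR.1 _ _, fun z₂ => ?_⟩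
      rw [Finset.sum_comm]
      simpa only [Fintype.sum_prod_type] using hR.2 (q.2.2, z₂)
  have key : val3 (Ghat G) (fun x y z a b c => Q x y a b * R z c)
      ≤ ∑ q : (Fin N × Fin N) × (Fin N × Fin N),
        (M q.1.1 q.1.2 * M q.2.1 q.2.2) * val2 G (fun y₂ z₂ b₂ c₂ =>
          (∑ s : (Fin K × Fin K) × Fin K, Q (q.1.1, q.2.1) (q.1.2, y₂) s.1 (s.2, b₂))
          * (∑ c₁, R (q.2.2, z₂) (c₁, c₂))) := by
    rw [val3_flat]
    have hb : ∀ u : (Fin N × Fin N) × (Fin N × Fin N)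
        × (Fin N × Fin N) × (Fin K × Fin K) × (Fin K × Fin K) × (Fin K × Fin K),
        Ghat G u.1 u.2.1 u.2.2.1 u.2.2.2.1 u.2.2.2.2.1 u.2.2.2.2.2
          * (Q u.1 u.2.1 u.2.2.2.1 u.2.2.2.2.1 * R u.2.2.1 u.2.2.2.2.2)
        ≤ (M u.1.1 u.2.1.1 * M u.1.2 u.2.2.1.1)
          * (G u.2.1.2 u.2.2.1.2 u.2.2.2.2.1.2 u.2.2.2.2.2.2
            * (Q u.1 u.2.1 u.2.2.2.1 u.2.2.2.2.1 * R u.2.2.1 u.2.2.2.2.2)) := by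
      intro u
      have h1 : Ghat G u.1 u.2.1 u.2.2.1 u.2.2.2.1 u.2.2.2.2.1 u.2.2.2.2.2
          ≤ (M u.1.1 u.2.1.1 * M u.1.2 u.2.2.1.1)
            * G u.2.1.2 u.2.2.1.2 u.2.2.2.2.1.2 u.2.2.2.2.2.2 :=
        mul_le_mul (mul_le_mul (hGM _ _ _ _) (hGM _ _ _ _) (hG0 _ _ _ _) (hM0 _ _))
          le_rfl (hG0 _ _ _ _) (mul_nonneg (hM0 _ _) (hM0 _ _))
      calc Ghat G u.1 u.2.1 u.2.2.1 u.2.2.2.1 u.2.2.2.2.1 u.2.2.2.2.2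
            * (Q u.1 u.2.1 u.2.2.2.1 u.2.2.2.2.1 * R u.2.2.1 u.2.2.2.2.2)
          ≤ ((M u.1.1 u.2.1.1 * M u.1.2 u.2.2.1.1)
              * G u.2.1.2 u.2.2.1.2 u.2.2.2.2.1.2 u.2.2.2.2.2.2)
            * (Q u.1 u.2.1 u.2.2.2.1 u.2.2.2.2.1 * R u.2.2.1 u.2.2.2.2.2) :=
            mul_le_mul_of_nonneg_right h1 (mul_nonneg (hQ.1 _ _ _ _) (hR.1 _ _))
        _ = (M u.1.1 u.2.1.1 * M u.1.2 u.2.2.1.1)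
            * (G u.2.1.2 u.2.2.1.2 u.2.2.2.2.1.2 u.2.2.2.2.2.2
              * (Q u.1 u.2.1 u.2.2.2.1 u.2.2.2.2.1 * R u.2.2.1 u.2.2.2.2.2)) := by ring
    refine le_of_le_of_eq (Finset.sum_le_sum fun u _ => hb u) ?_
    have e1 : (∑ u : (Fin N × Fin N) × (Fin N × Fin N)
        × (Fin N × Fin N) × (Fin K × Fin K) × (Fin K × Fin K) × (Fin K × Fin K),
        (M u.1.1 u.2.1.1 * M u.1.2 u.2.2.1.1)
          * (G u.2.1.2 u.2.2.1.2 u.2.2.2.2.1.2 u.2.2.2.2.2.2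
            * (Q u.1 u.2.1 u.2.2.2.1 u.2.2.2.2.1 * R u.2.2.1 u.2.2.2.2.2)))
        = ∑ w : ((Fin N × Fin N) × (Fin N × Fin N))
            × ((Fin N × Fin N × Fin K × Fin K) × Fin K × (Fin K × Fin K) × Fin K),
          (M (bilocEquiv₁ w).1.1 (bilocEquiv₁ w).2.1.1
              * M (bilocEquiv₁ w).1.2 (bilocEquiv₁ w).2.2.1.1)
            * (G (bilocEquiv₁ w).2.1.2 (bilocEquiv₁ w).2.2.1.2
                (bilocEquiv₁ w).2.2.2.2.1.2 (bilocEquiv₁ w).2.2.2.2.2.2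
              * (Q (bilocEquiv₁ w).1 (bilocEquiv₁ w).2.1 (bilocEquiv₁ w).2.2.2.1
                  (bilocEquiv₁ w).2.2.2.2.1
                * R (bilocEquiv₁ w).2.2.1 (bilocEquiv₁ w).2.2.2.2.2)) :=
      (Fintype.sum_equiv bilocEquiv₁ _ _ fun w => rfl).symm
    rw [e1]
    simp (config := { maxSteps := 4000000 }) only [val2_flat, bilocEquiv₁, Equiv.coe_fn_mk,
      Fintype.sum_prod_type, Finset.mul_sum, Finset.sum_mul]
  refine key.trans ?_
  calc (∑ q : (Fin N × Fin N) × (Fin N × Fin N),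
        (M q.1.1 q.1.2 * M q.2.1 q.2.2) * val2 G (fun y₂ z₂ b₂ c₂ =>
          (∑ s : (Fin K × Fin K) × Fin K, Q (q.1.1, q.2.1) (q.1.2, y₂) s.1 (s.2, b₂))
          * (∑ c₁, R (q.2.2, z₂) (c₁, c₂))))
      ≤ ∑ q : (Fin N × Fin N) × (Fin N × Fin N), (M q.1.1 q.1.2 * M q.2.1 q.2.2) * lv :=
        Finset.sum_le_sum fun q _ => mul_le_mul_of_nonneg_left (hloc _ (hLloc q))
          (mul_nonneg (hM0 _ _) (hM0 _ _))
    _ = ((∑ p : Fin N × Fin N, M p.1 p.2) * (∑ p : Fin N × Fin N, M p.1 p.2)) * lv := by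
        rw [← Finset.sum_mul, sum2_mul (fun p : Fin N × Fin N => M p.1 p.2)
          (fun p : Fin N × Fin N => M p.1 p.2)]
    _ ≤ lv := le_of_le_of_eq (mul_le_mul_of_nonneg_right (mul_le_one₀ hS1 hS0 hS1) hlv0)
        (one_mul lv)


set_option maxHeartbeats 3200000 in
lemma biloc_val_le₂ {N K : ℕ} {G : Fin N → Fin N → Fin K → Fin K → ℝ} {M : Fin N → Fin N → ℝ}
    {lv : ℝ}
    (hG0 : ∀ x y a b, 0 ≤ G x y a b)
    (hGM : ∀ x y a b, G x y a b ≤ M x y)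
    (hM0 : ∀ x y, 0 ≤ M x y)
    (hS1 : ∑ p : Fin N × Fin N, M p.1 p.2 ≤ 1)
    (hlv0 : 0 ≤ lv)
    (hloc : ∀ P' : Fin N → Fin N → Fin K → Fin K → ℝ, IsLocal2 P' → val2 G P' ≤ lv)
    {Q : Fin N × Fin N → Fin N × Fin N → Fin K × Fin K → Fin K × Fin K → ℝ}
    {R : Fin N × Fin N → Fin K × Fin K → ℝ}
    (hQ : IsBeh2 Q) (hR : IsBeh1 R) :
    val3 (Ghat G) (fun x y z a b c => Q y z b c * R x a) ≤ lv := by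
  have hS0 : 0 ≤ ∑ p : Fin N × Fin N, M p.1 p.2 := Finset.sum_nonneg fun p _ => hM0 _ _
  have hLloc : ∀ q : (Fin N × Fin N) × (Fin N × Fin N), IsLocal2 (fun x₁ y₁ a₁ b₁ =>
      (∑ a₂, R (x₁, q.1.1) (a₁, a₂))
      * (∑ p : Fin K × Fin K × Fin K, Q (y₁, q.2.1) (q.1.2, q.2.2) (b₁, p.1) p.2)) := by
    intro q
    refine ⟨1, fun _ => 1,
      fun _ x₁ a₁ => ∑ a₂, R (x₁, q.1.1) (a₁, a₂),
      fun _ y₁ b₁ => ∑ p : Fin K × Fin K × Fin K, Q (y₁, q.2.1) (q.1.2, q.2.2) (b₁, p.1) p.2,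
      fun _ => zero_le_one, by simp, ?_, ?_, fun x y a b => by simp⟩
    · refine fun j => ⟨fun x₁ a₁ => Finset.sum_nonneg fun a₂ _ => hR.1 _ _, fun x₁ => ?_⟩
      simpa only [Fintype.sum_prod_type] using hR.2 (x₁, q.1.1)
    · refine fun j => ⟨fun y₁ b₁ => Finset.sum_nonneg fun p _ => hQ.1 _ _ _ _, fun y₁ => ?_⟩
      simpa only [Fintype.sum_prod_type] using hQ.2 (y₁, q.2.1) (q.1.2, q.2.2)
  have key : val3 (Ghat G) (fun x y z a b c => Q y z b c * R x a)
      ≤ ∑ q : (Fin N × Fin N) × (Fin N × Fin N),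
        (M q.1.1 q.1.2 * M q.2.1 q.2.2) * val2 G (fun x₁ y₁ a₁ b₁ =>
          (∑ a₂, R (x₁, q.1.1) (a₁, a₂))
          * (∑ p : Fin K × Fin K × Fin K, Q (y₁, q.2.1) (q.1.2, q.2.2) (b₁, p.1) p.2)) := by
    rw [val3_flat]
    have hb : ∀ u : (Fin N × Fin N) × (Fin N × Fin N)
        × (Fin N × Fin N) × (Fin K × Fin K) × (Fin K × Fin K) × (Fin K × Fin K),
        Ghat G u.1 u.2.1 u.2.2.1 u.2.2.2.1 u.2.2.2.2.1 u.2.2.2.2.2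
          * (Q u.2.1 u.2.2.1 u.2.2.2.2.1 u.2.2.2.2.2 * R u.1 u.2.2.2.1)
        ≤ (M u.1.2 u.2.2.1.1 * M u.2.1.2 u.2.2.1.2)
          * (G u.1.1 u.2.1.1 u.2.2.2.1.1 u.2.2.2.2.1.1
            * (Q u.2.1 u.2.2.1 u.2.2.2.2.1 u.2.2.2.2.2 * R u.1 u.2.2.2.1)) := by
      intro u
      have h1 : Ghat G u.1 u.2.1 u.2.2.1 u.2.2.2.1 u.2.2.2.2.1 u.2.2.2.2.2
          ≤ G u.1.1 u.2.1.1 u.2.2.2.1.1 u.2.2.2.2.1.1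
            * M u.1.2 u.2.2.1.1 * M u.2.1.2 u.2.2.1.2 :=
        mul_le_mul (mul_le_mul le_rfl (hGM _ _ _ _) (hG0 _ _ _ _) (hG0 _ _ _ _))
          (hGM _ _ _ _) (hG0 _ _ _ _) (mul_nonneg (hG0 _ _ _ _) (hM0 _ _))
      calc Ghat G u.1 u.2.1 u.2.2.1 u.2.2.2.1 u.2.2.2.2.1 u.2.2.2.2.2
            * (Q u.2.1 u.2.2.1 u.2.2.2.2.1 u.2.2.2.2.2 * R u.1 u.2.2.2.1)
          ≤ (G u.1.1 u.2.1.1 u.2.2.2.1.1 u.2.2.2.2.1.1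
              * M u.1.2 u.2.2.1.1 * M u.2.1.2 u.2.2.1.2)
            * (Q u.2.1 u.2.2.1 u.2.2.2.2.1 u.2.2.2.2.2 * R u.1 u.2.2.2.1) :=
            mul_le_mul_of_nonneg_right h1 (mul_nonneg (hQ.1 _ _ _ _) (hR.1 _ _))
        _ = (M u.1.2 u.2.2.1.1 * M u.2.1.2 u.2.2.1.2)
            * (G u.1.1 u.2.1.1 u.2.2.2.1.1 u.2.2.2.2.1.1
              * (Q u.2.1 u.2.2.1 u.2.2.2.2.1 u.2.2.2.2.2 * R u.1 u.2.2.2.1)) := by ring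
    refine le_of_le_of_eq (Finset.sum_le_sum fun u _ => hb u) ?_
    have e1 : (∑ u : (Fin N × Fin N) × (Fin N × Fin N)
        × (Fin N × Fin N) × (Fin K × Fin K) × (Fin K × Fin K) × (Fin K × Fin K),
        (M u.1.2 u.2.2.1.1 * M u.2.1.2 u.2.2.1.2)
          * (G u.1.1 u.2.1.1 u.2.2.2.1.1 u.2.2.2.2.1.1
            * (Q u.2.1 u.2.2.1 u.2.2.2.2.1 u.2.2.2.2.2 * R u.1 u.2.2.2.1)))
        = ∑ w : ((Fin N × Fin N) × (Fin N × Fin N))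
            × ((Fin N × Fin N × Fin K × Fin K) × (Fin K × Fin K × Fin K) × Fin K),
          (M (bilocEquiv₂ w).1.2 (bilocEquiv₂ w).2.2.1.1
              * M (bilocEquiv₂ w).2.1.2 (bilocEquiv₂ w).2.2.1.2)
            * (G (bilocEquiv₂ w).1.1 (bilocEquiv₂ w).2.1.1
                (bilocEquiv₂ w).2.2.2.1.1 (bilocEquiv₂ w).2.2.2.2.1.1
              * (Q (bilocEquiv₂ w).2.1 (bilocEquiv₂ w).2.2.1
                  (bilocEquiv₂ w).2.2.2.2.1 (bilocEquiv₂ w).2.2.2.2.2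
                * R (bilocEquiv₂ w).1 (bilocEquiv₂ w).2.2.2.1)) :=
      (Fintype.sum_equiv bilocEquiv₂ _ _ fun w => rfl).symm
    rw [e1]
    simp (config := { maxSteps := 4000000 }) only [val2_flat, bilocEquiv₂, Equiv.coe_fn_mk,
      Fintype.sum_prod_type, Finset.mul_sum, Finset.sum_mul]
    refine Finset.sum_congr rfl fun _ _ => Finset.sum_congr rfl fun _ _ =>
        Finset.sum_congr rfl fun _ _ => Finset.sum_congr rfl fun _ _ =>
        Finset.sum_congr rfl fun _ _ => Finset.sum_congr rfl fun _ _ =>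
        Finset.sum_congr rfl fun _ _ => Finset.sum_congr rfl fun _ _ =>
        Finset.sum_congr rfl fun _ _ => Finset.sum_congr rfl fun _ _ =>
        Finset.sum_congr rfl fun _ _ => Finset.sum_congr rfl fun _ _ => by ring
  refine key.trans ?_
  calc (∑ q : (Fin N × Fin N) × (Fin N × Fin N),
        (M q.1.1 q.1.2 * M q.2.1 q.2.2) * val2 G (fun x₁ y₁ a₁ b₁ =>
          (∑ a₂, R (x₁, q.1.1) (a₁, a₂))
          * (∑ p : Fin K × Fin K × Fin K, Q (y₁, q.2.1) (q.1.2, q.2.2) (b₁, p.1) p.2)))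
      ≤ ∑ q : (Fin N × Fin N) × (Fin N × Fin N), (M q.1.1 q.1.2 * M q.2.1 q.2.2) * lv :=
        Finset.sum_le_sum fun q _ => mul_le_mul_of_nonneg_left (hloc _ (hLloc q))
          (mul_nonneg (hM0 _ _) (hM0 _ _))
    _ = ((∑ p : Fin N × Fin N, M p.1 p.2) * (∑ p : Fin N × Fin N, M p.1 p.2)) * lv := by
        rw [← Finset.sum_mul, sum2_mul (fun p : Fin N × Fin N => M p.1 p.2)
          (fun p : Fin N × Fin N => M p.1 p.2)]
    _ ≤ lv := le_of_le_of_eq (mul_le_mul_of_nonneg_right (mul_le_one₀ hS1 hS0 hS1) hlv0)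
        (one_mul lv)

set_option maxHeartbeats 3200000 in
lemma biloc_val_le₃ {N K : ℕ} {G : Fin N → Fin N → Fin K → Fin K → ℝ} {M : Fin N → Fin N → ℝ}
    {lv : ℝ}
    (hG0 : ∀ x y a b, 0 ≤ G x y a b)
    (hGM : ∀ x y a b, G x y a b ≤ M x y)
    (hM0 : ∀ x y, 0 ≤ M x y)
    (hS1 : ∑ p : Fin N × Fin N, M p.1 p.2 ≤ 1)
    (hlv0 : 0 ≤ lv)
    (hloc : ∀ P' : Fin N → Fin N → Fin K → Fin K → ℝ, IsLocal2 P' → val2 G P' ≤ lv)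
    {Q : Fin N × Fin N → Fin N × Fin N → Fin K × Fin K → Fin K × Fin K → ℝ}
    {R : Fin N × Fin N → Fin K × Fin K → ℝ}
    (hQ : IsBeh2 Q) (hR : IsBeh1 R) :
    val3 (Ghat G) (fun x y z a b c => Q x z a c * R y b) ≤ lv := by
  have hS0 : 0 ≤ ∑ p : Fin N × Fin N, M p.1 p.2 := Finset.sum_nonneg fun p _ => hM0 _ _
  have hLloc : ∀ q : (Fin N × Fin N) × (Fin N × Fin N), IsLocal2 (fun x₁ y₁ a₁ b₁ =>
      (∑ p : Fin K × Fin K × Fin K, Q (x₁, q.1.1) (q.1.2, q.2.2) (a₁, p.1) p.2)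
      * (∑ b₂, R (y₁, q.2.1) (b₁, b₂))) := by
    intro q
    refine ⟨1, fun _ => 1,
      fun _ x₁ a₁ => ∑ p : Fin K × Fin K × Fin K, Q (x₁, q.1.1) (q.1.2, q.2.2) (a₁, p.1) p.2,
      fun _ y₁ b₁ => ∑ b₂, R (y₁, q.2.1) (b₁, b₂),
      fun _ => zero_le_one, by simp, ?_, ?_, fun x y a b => by simp⟩
    · refine fun j => ⟨fun x₁ a₁ => Finset.sum_nonneg fun p _ => hQ.1 _ _ _ _, fun x₁ => ?_⟩
      simpa only [Fintype.sum_prod_type] using hQ.2 (x₁, q.1.1) (q.1.2, q.2.2)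
    · refine fun j => ⟨fun y₁ b₁ => Finset.sum_nonneg fun b₂ _ => hR.1 _ _, fun y₁ => ?_⟩
      simpa only [Fintype.sum_prod_type] using hR.2 (y₁, q.2.1)
  have key : val3 (Ghat G) (fun x y z a b c => Q x z a c * R y b)
      ≤ ∑ q : (Fin N × Fin N) × (Fin N × Fin N),
        (M q.1.1 q.1.2 * M q.2.1 q.2.2) * val2 G (fun x₁ y₁ a₁ b₁ =>
          (∑ p : Fin K × Fin K × Fin K, Q (x₁, q.1.1) (q.1.2, q.2.2) (a₁, p.1) p.2)
          * (∑ b₂, R (y₁, q.2.1) (b₁, b₂))) := by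
    rw [val3_flat]
    have hb : ∀ u : (Fin N × Fin N) × (Fin N × Fin N)
        × (Fin N × Fin N) × (Fin K × Fin K) × (Fin K × Fin K) × (Fin K × Fin K),
        Ghat G u.1 u.2.1 u.2.2.1 u.2.2.2.1 u.2.2.2.2.1 u.2.2.2.2.2
          * (Q u.1 u.2.2.1 u.2.2.2.1 u.2.2.2.2.2 * R u.2.1 u.2.2.2.2.1)
        ≤ (M u.1.2 u.2.2.1.1 * M u.2.1.2 u.2.2.1.2)
          * (G u.1.1 u.2.1.1 u.2.2.2.1.1 u.2.2.2.2.1.1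
            * (Q u.1 u.2.2.1 u.2.2.2.1 u.2.2.2.2.2 * R u.2.1 u.2.2.2.2.1)) := by
      intro u
      have h1 : Ghat G u.1 u.2.1 u.2.2.1 u.2.2.2.1 u.2.2.2.2.1 u.2.2.2.2.2
          ≤ G u.1.1 u.2.1.1 u.2.2.2.1.1 u.2.2.2.2.1.1
            * M u.1.2 u.2.2.1.1 * M u.2.1.2 u.2.2.1.2 :=
        mul_le_mul (mul_le_mul le_rfl (hGM _ _ _ _) (hG0 _ _ _ _) (hG0 _ _ _ _))
          (hGM _ _ _ _) (hG0 _ _ _ _) (mul_nonneg (hG0 _ _ _ _) (hM0 _ _))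
      calc Ghat G u.1 u.2.1 u.2.2.1 u.2.2.2.1 u.2.2.2.2.1 u.2.2.2.2.2
            * (Q u.1 u.2.2.1 u.2.2.2.1 u.2.2.2.2.2 * R u.2.1 u.2.2.2.2.1)
          ≤ (G u.1.1 u.2.1.1 u.2.2.2.1.1 u.2.2.2.2.1.1
              * M u.1.2 u.2.2.1.1 * M u.2.1.2 u.2.2.1.2)
            * (Q u.1 u.2.2.1 u.2.2.2.1 u.2.2.2.2.2 * R u.2.1 u.2.2.2.2.1) :=
            mul_le_mul_of_nonneg_right h1 (mul_nonneg (hQ.1 _ _ _ _) (hR.1 _ _))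
        _ = (M u.1.2 u.2.2.1.1 * M u.2.1.2 u.2.2.1.2)
            * (G u.1.1 u.2.1.1 u.2.2.2.1.1 u.2.2.2.2.1.1
              * (Q u.1 u.2.2.1 u.2.2.2.1 u.2.2.2.2.2 * R u.2.1 u.2.2.2.2.1)) := by ring
    refine le_of_le_of_eq (Finset.sum_le_sum fun u _ => hb u) ?_
    have e1 : (∑ u : (Fin N × Fin N) × (Fin N × Fin N)
        × (Fin N × Fin N) × (Fin K × Fin K) × (Fin K × Fin K) × (Fin K × Fin K),
        (M u.1.2 u.2.2.1.1 * M u.2.1.2 u.2.2.1.2)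
          * (G u.1.1 u.2.1.1 u.2.2.2.1.1 u.2.2.2.2.1.1
            * (Q u.1 u.2.2.1 u.2.2.2.1 u.2.2.2.2.2 * R u.2.1 u.2.2.2.2.1)))
        = ∑ w : ((Fin N × Fin N) × (Fin N × Fin N))
            × ((Fin N × Fin N × Fin K × Fin K) × Fin K × Fin K × Fin K × Fin K),
          (M (bilocEquiv₃ w).1.2 (bilocEquiv₃ w).2.2.1.1
              * M (bilocEquiv₃ w).2.1.2 (bilocEquiv₃ w).2.2.1.2)
            * (G (bilocEquiv₃ w).1.1 (bilocEquiv₃ w).2.1.1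
                (bilocEquiv₃ w).2.2.2.1.1 (bilocEquiv₃ w).2.2.2.2.1.1
              * (Q (bilocEquiv₃ w).1 (bilocEquiv₃ w).2.2.1
                  (bilocEquiv₃ w).2.2.2.1 (bilocEquiv₃ w).2.2.2.2.2
                * R (bilocEquiv₃ w).2.1 (bilocEquiv₃ w).2.2.2.2.1)) :=
      (Fintype.sum_equiv bilocEquiv₃ _ _ fun w => rfl).symm
    rw [e1]
    simp (config := { maxSteps := 4000000 }) only [val2_flat, bilocEquiv₃, Equiv.coe_fn_mk,
      Fintype.sum_prod_type, Finset.mul_sum, Finset.sum_mul]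
  refine key.trans ?_
  calc (∑ q : (Fin N × Fin N) × (Fin N × Fin N),
        (M q.1.1 q.1.2 * M q.2.1 q.2.2) * val2 G (fun x₁ y₁ a₁ b₁ =>
          (∑ p : Fin K × Fin K × Fin K, Q (x₁, q.1.1) (q.1.2, q.2.2) (a₁, p.1) p.2)
          * (∑ b₂, R (y₁, q.2.1) (b₁, b₂))))
      ≤ ∑ q : (Fin N × Fin N) × (Fin N × Fin N), (M q.1.1 q.1.2 * M q.2.1 q.2.2) * lv :=
        Finset.sum_le_sum fun q _ => mul_le_mul_of_nonneg_left (hloc _ (hLloc q))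
          (mul_nonneg (hM0 _ _) (hM0 _ _))
    _ = ((∑ p : Fin N × Fin N, M p.1 p.2) * (∑ p : Fin N × Fin N, M p.1 p.2)) * lv := by
        rw [← Finset.sum_mul, sum2_mul (fun p : Fin N × Fin N => M p.1 p.2)
          (fun p : Fin N × Fin N => M p.1 p.2)]
    _ ≤ lv := le_of_le_of_eq (mul_le_mul_of_nonneg_right (mul_le_one₀ hS1 hS0 hS1) hlv0)
        (one_mul lv)

end Aux

/-- if `G` is a bipartite pseudotelepathy game, i.e. a bipartite game
(nonnegative coefficients with `∑_{x,y} max_{a,b} G^{ab}_{xy} ≤ 1`) with `ω_{Q²}(G) = 1`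
and `ω_{L²}(G) < 1`, then the tripartite game `Ĝ` satisfies `ω_{Q³}(Ĝ) = 1` and
`ω_{BL³_G}(Ĝ) < 1`. -/
theorem unbounded_bell_stmt12 {N K : ℕ} (G : Fin N → Fin N → Fin K → Fin K → ℝ)
    (hG : IsGame2 G) (hq : qVal2 G = 1) (hl : lVal2 G < 1) :
    qVal3 (Ghat G) = 1 ∧ bVal3 (Ghat G) < 1 := by
  classical
  -- K ≠ 0
  have hK : K ≠ 0 := by
    intro hK0
    subst hK0
    have h0 : qVal2 G ≤ 0 := by
      refine Real.sSup_le ?_ le_rfl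
      rintro v ⟨P, ⟨d₁, d₂, ψ, E, F, hψ, hE, hF, hid⟩, rfl⟩
      rcases isEmpty_or_nonempty (Fin N) with h | h
      · haveI := h
        simp [val2]
      · exfalso
        obtain ⟨x⟩ := h
        have h1 := (hE x).2
        rw [Finset.univ_eq_empty, Finset.sum_empty] at h1
        rcases Nat.eq_zero_or_pos d₁ with hd | hd
        · subst hd
          simp at hψ
        · have h2 := congrFun (congrFun h1 ⟨0, hd⟩) ⟨0, hd⟩
          rw [Matrix.zero_apply, Matrix.one_apply_eq] at h2
          exact zero_ne_one h2
    rw [hq] at h0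
    norm_num at h0
  haveI hKn : Nonempty (Fin K) := ⟨⟨0, Nat.pos_of_ne_zero hK⟩⟩
  -- the pointwise bound M
  have hGM : ∀ x y a b, G x y a b ≤ (fun x y => ⨆ a', ⨆ b', G x y a' b') x y := by
    intro x y a b
    have h1 : G x y a b ≤ ⨆ b', G x y a b' :=
      le_ciSup (Set.Finite.bddAbove (Set.finite_range _)) b
    exact h1.trans (le_ciSup (f := fun a' => ⨆ b', G x y a' b')
      (Set.Finite.bddAbove (Set.finite_range _)) a)
  have hM0 : ∀ x y, 0 ≤ (fun x y => ⨆ a', ⨆ b', G x y a' b') x y := fun x y =>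
    (hG.1 x y (Classical.arbitrary _) (Classical.arbitrary _)).trans (hGM x y _ _)
  have hS1 : ∑ p : Fin N × Fin N, (fun x y => ⨆ a', ⨆ b', G x y a' b') p.1 p.2 ≤ 1 :=
    le_of_eq_of_le (sum_unpair fun x y => ⨆ a', ⨆ b', G x y a' b').symm hG.2
  -- upper bound for the tripartite quantum value
  have hbdd3 : BddAbove {v | ∃ P, IsQBeh3 P ∧ v = val3 (Ghat G) P} := by
    refine ⟨1, ?_⟩
    rintro v ⟨P, hP, rfl⟩
    obtain ⟨hP0, hPs⟩ := qbeh3_props hP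
    exact val3_ghat_le hG.1 hGM hM0 hS1 hP0 hPs
  have hub : qVal3 (Ghat G) ≤ 1 := by
    refine Real.sSup_le ?_ zero_le_one
    rintro v ⟨P, hP, rfl⟩
    obtain ⟨hP0, hPs⟩ := qbeh3_props hP
    exact val3_ghat_le hG.1 hGM hM0 hS1 hP0 hPs
  have hlb : 1 ≤ qVal3 (Ghat G) := by
    by_contra hlt
    push_neg at hlt
    have hδ0 : 0 < 1 - qVal3 (Ghat G) := by linarith
    set ε := min ((1 - qVal3 (Ghat G)) / 4) 1 with hεdef
    have hε0 : 0 < ε := lt_min (by linarith) one_pos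
    have hε1 : ε ≤ 1 := min_le_right _ _
    have hεδ : ε ≤ (1 - qVal3 (Ghat G)) / 4 := min_le_left _ _
    have hne : {v | ∃ P, IsQBeh2 P ∧ v = val2 G P}.Nonempty := by
      by_contra hne
      rw [Set.not_nonempty_iff_eq_empty] at hne
      have h0 : qVal2 G = 0 := by rw [qVal2, hne]; exact Real.sSup_empty
      rw [hq] at h0
      norm_num at h0
    obtain ⟨v, hvmem, hv⟩ := exists_lt_of_lt_csSup hne
      (show (1 - ε : ℝ) < sSup {v | ∃ P, IsQBeh2 P ∧ v = val2 G P} by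
        rw [show sSup {v | ∃ P, IsQBeh2 P ∧ v = val2 G P} = qVal2 G from rfl, hq]; linarith)
    obtain ⟨P₂, hP₂, rfl⟩ := hvmem
    have h3 := qbeh3_construct hP₂
    have hval := val3_ghat_cube G P₂
    have hle : val3 (Ghat G) (fun x y z a b c =>
        P₂ x.1 y.1 a.1 b.1 * P₂ x.2 z.1 a.2 c.1 * P₂ y.2 z.2 b.2 c.2) ≤ qVal3 (Ghat G) :=
      le_csSup hbdd3 ⟨_, h3, rfl⟩
    have h0' : (0:ℝ) ≤ 1 - ε := by linarith
    have hc : (1 - ε)^3 ≤ (val2 G P₂)^3 := pow_le_pow_left₀ h0' (le_of_lt hv) 3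
    have hcube : 1 - 3*ε ≤ (1 - ε)^3 := by nlinarith [sq_nonneg ε]
    have hval' : val3 (Ghat G) (fun x y z a b c =>
        P₂ x.1 y.1 a.1 b.1 * P₂ x.2 z.1 a.2 c.1 * P₂ y.2 z.2 b.2 c.2) = (val2 G P₂)^3 := by
      rw [hval]; ring
    linarith [hle, hc, hcube, hval'.ge, hval'.le]
  -- local value facts
  have hbddl : BddAbove {v | ∃ P, IsLocal2 P ∧ v = val2 G P} := by
    refine ⟨1, ?_⟩
    rintro v ⟨P, hP, rfl⟩
    obtain ⟨hP0, hPs⟩ := local_isBeh hP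
    exact val2_le_of_beh hGM hS1 hP0 hPs
  have hloc : ∀ P' : Fin N → Fin N → Fin K → Fin K → ℝ,
      IsLocal2 P' → val2 G P' ≤ lVal2 G := fun P' h => le_csSup hbddl ⟨P', h, rfl⟩
  have hunif : IsLocal2 (fun (_ _ : Fin N) (_ _ : Fin K) => (1/(K:ℝ)) * (1/(K:ℝ))) := by
    refine ⟨1, fun _ => 1, fun _ _ _ => 1/(K:ℝ), fun _ _ _ => 1/(K:ℝ),
      fun _ => zero_le_one, by simp, ?_, ?_, fun x y a b => by simp⟩
    · refine fun j => ⟨fun _ _ => by positivity, fun _ => ?_⟩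
      rw [Finset.sum_const, Finset.card_univ, Fintype.card_fin, nsmul_eq_mul]
      field_simp
    · refine fun j => ⟨fun _ _ => by positivity, fun _ => ?_⟩
      rw [Finset.sum_const, Finset.card_univ, Fintype.card_fin, nsmul_eq_mul]
      field_simp
  have hlv0 : 0 ≤ lVal2 G := by
    refine le_trans ?_ (hloc _ hunif)
    rw [val2]
    refine Finset.sum_nonneg fun x _ => Finset.sum_nonneg fun y _ =>
      Finset.sum_nonneg fun a _ => Finset.sum_nonneg fun b _ =>
      mul_nonneg (hG.1 _ _ _ _) (by positivity)
  have hterm : ∀ P', BilocTerm3 P' → val3 (Ghat G) P' ≤ lVal2 G := by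
    rintro P' (⟨Q, R, hQ, hR, heq⟩ | ⟨Q, R, hQ, hR, heq⟩ | ⟨Q, R, hQ, hR, heq⟩)
    · have hPe : P' = fun x y z a b c => Q x y a b * R z c := by
        funext x y z a b c; exact heq x y z a b c
      rw [hPe]
      exact biloc_val_le₁ hG.1 hGM hM0 hS1 hlv0 hloc hQ hR
    · have hPe : P' = fun x y z a b c => Q y z b c * R x a := by
        funext x y z a b c; exact heq x y z a b c
      rw [hPe]
      exact biloc_val_le₂ hG.1 hGM hM0 hS1 hlv0 hloc hQ hR
    · have hPe : P' = fun x y z a b c => Q x z a c * R y b := by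
        funext x y z a b c; exact heq x y z a b c
      rw [hPe]
      exact biloc_val_le₃ hG.1 hGM hM0 hS1 hlv0 hloc hQ hR
  have hbv : bVal3 (Ghat G) ≤ lVal2 G := by
    refine Real.sSup_le ?_ hlv0
    rintro v ⟨P, ⟨m, p, Ps, hp0, hp1, hPs, heq⟩, rfl⟩
    have hlin : val3 (Ghat G) P = ∑ j, p j * val3 (Ghat G) (Ps j) := by
      simp only [val3_flat, heq, Finset.mul_sum]
      rw [Finset.sum_comm]
      exact Finset.sum_congr rfl fun j _ => Finset.sum_congr rfl fun u _ => by ring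
    rw [hlin]
    calc ∑ j, p j * val3 (Ghat G) (Ps j) ≤ ∑ j, p j * lVal2 G :=
        Finset.sum_le_sum fun j _ => mul_le_mul_of_nonneg_left (hterm _ (hPs j)) (hp0 j)
      _ = lVal2 G := by rw [← Finset.sum_mul, hp1, one_mul]
  exact ⟨le_antisymm hub hlb, lt_of_le_of_lt hbv hl⟩

end BellGames
end
end

section
/- Let G be a tripartite Bell functional with nonnegative coefficients and K outputs per player. Then ω_{Q³}(G) ≤ K · ω_{BL³_G}(G). -/
open scoped BigOperators
open Kronecker
open scoped ComplexOrder

noncomputable section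

namespace BellGames

section Aux

open Matrix

lemma kron_conjTranspose {m n m' n' : Type*} (A : Matrix m n ℂ) (B : Matrix m' n' ℂ) :
    (A ⊗ₖ B)ᴴ = Aᴴ ⊗ₖ Bᴴ := by
  ext ⟨i, i'⟩ ⟨j, j'⟩
  simp [Matrix.conjTranspose_apply, star_mul']

lemma psd_kron {m m' : Type*} [Fintype m] [Fintype m'] [DecidableEq m] [DecidableEq m']
    {A : Matrix m m ℂ} {B : Matrix m' m' ℂ} (hA : A.PosSemidef) (hB : B.PosSemidef) :
    (A ⊗ₖ B).PosSemidef := by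
  exact hA.kronecker hB

lemma quadform_eq_dot {n : Type*} [Fintype n] (ψ : n → ℂ) (M : Matrix n n ℂ) :
    (∑ i, ∑ j, (starRingEnd ℂ) (ψ i) * M i j * ψ j) = dotProduct (star ψ) (M.mulVec ψ) := by
  simp [dotProduct, Matrix.mulVec, Finset.mul_sum, mul_assoc]

lemma quadform_nonneg {n : Type*} [Fintype n] {M : Matrix n n ℂ} (hM : M.PosSemidef) (ψ : n → ℂ) :
    0 ≤ ∑ i, ∑ j, (starRingEnd ℂ) (ψ i) * M i j * ψ j := by
  rw [quadform_eq_dot]; exact hM.dotProduct_mulVec_nonneg ψ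

lemma sum_quadform {n ι : Type*} [Fintype n] [Fintype ι] (ψ : n → ℂ) (M : ι → Matrix n n ℂ) :
    ∑ k, ∑ i, ∑ j, (starRingEnd ℂ) (ψ i) * M k i j * ψ j
      = ∑ i, ∑ j, (starRingEnd ℂ) (ψ i) * (∑ k, M k) i j * ψ j := by
  simp only [Matrix.sum_apply, Finset.mul_sum, Finset.sum_mul]
  rw [Finset.sum_comm]
  exact Finset.sum_congr rfl fun i _ => Finset.sum_comm

lemma kron_sum_right {m n ι : Type*} [Fintype ι] (A : Matrix m m ℂ) (B : ι → Matrix n n ℂ) :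
    A ⊗ₖ (∑ c, B c) = ∑ c, A ⊗ₖ B c := by
  ext ⟨i, i'⟩ ⟨j, j'⟩
  simp [Matrix.sum_apply, Finset.mul_sum]

lemma kron_sum_left {m n ι : Type*} [Fintype ι] (A : ι → Matrix m m ℂ) (B : Matrix n n ℂ) :
    (∑ c, A c) ⊗ₖ B = ∑ c, A c ⊗ₖ B := by
  ext ⟨i, i'⟩ ⟨j, j'⟩
  simp [Matrix.sum_apply, Finset.sum_mul]

lemma quadform_one {n : Type*} [Fintype n] [DecidableEq n] (ψ : n → ℂ) :
    ∑ i, ∑ j, (starRingEnd ℂ) (ψ i) * (1 : Matrix n n ℂ) i j * ψ j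
      = ((∑ i, Complex.normSq (ψ i) : ℝ) : ℂ) := by
  push_cast
  refine Finset.sum_congr rfl fun i _ => ?_
  rw [Finset.sum_eq_single i]
  · simp [Matrix.one_apply, Complex.normSq_eq_conj_mul_self]
  · intro j _ hj; simp [Matrix.one_apply, Ne.symm hj]
  · simp

lemma beh2_le_one {X Y A B : Type*} [Fintype A] [Fintype B] {Q : X → Y → A → B → ℝ}
    (h : IsBeh2 Q) (x : X) (y : Y) (a : A) (b : B) : Q x y a b ≤ 1 := by
  calc Q x y a b ≤ ∑ b', Q x y a b' :=
        Finset.single_le_sum (f := fun b' => Q x y a b') (fun _ _ => h.1 x y a _)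
          (Finset.mem_univ b)
    _ ≤ ∑ a', ∑ b', Q x y a' b' :=
        Finset.single_le_sum (f := fun a' => ∑ b', Q x y a' b')
          (fun a' _ => Finset.sum_nonneg fun _ _ => h.1 x y a' _) (Finset.mem_univ a)
    _ = 1 := h.2 x y

lemma beh1_le_one {X A : Type*} [Fintype A] {R : X → A → ℝ}
    (h : IsBeh1 R) (x : X) (a : A) : R x a ≤ 1 := by
  calc R x a ≤ ∑ a', R x a' :=
        Finset.single_le_sum (f := fun a' => R x a') (fun _ _ => h.1 x _) (Finset.mem_univ a)
    _ = 1 := h.2 x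

lemma bilocterm_bounds {X Y Z A B C : Type*} [Fintype A] [Fintype B] [Fintype C]
    {P : X → Y → Z → A → B → C → ℝ} (h : BilocTerm3 P) (x : X) (y : Y) (z : Z)
    (a : A) (b : B) (c : C) : 0 ≤ P x y z a b c ∧ P x y z a b c ≤ 1 := by
  rcases h with ⟨Q, R, hQ, hR, he⟩ | ⟨Q, R, hQ, hR, he⟩ | ⟨Q, R, hQ, hR, he⟩ <;> rw [he] <;>
    exact ⟨mul_nonneg (hQ.1 _ _ _ _) (hR.1 _ _),
      mul_le_one₀ (beh2_le_one hQ _ _ _ _) (hR.1 _ _) (beh1_le_one hR _ _)⟩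

lemma genbiloc_bounds {X Y Z A B C : Type*} [Fintype A] [Fintype B] [Fintype C]
    {P : X → Y → Z → A → B → C → ℝ} (h : IsGenBiloc3 P) (x : X) (y : Y) (z : Z)
    (a : A) (b : B) (c : C) : 0 ≤ P x y z a b c ∧ P x y z a b c ≤ 1 := by
  obtain ⟨m, p, Ps, hp, hps, hterm, hPeq⟩ := h
  rw [hPeq]
  constructor
  · exact Finset.sum_nonneg fun j _ =>
      mul_nonneg (hp j) ((bilocterm_bounds (hterm j) x y z a b c).1)
  · calc ∑ j, p j * Ps j x y z a b c ≤ ∑ j, p j := Finset.sum_le_sum fun j _ =>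
          mul_le_of_le_one_right (hp j) ((bilocterm_bounds (hterm j) x y z a b c).2)
      _ = 1 := hps

lemma biloc_set_ub {X Y Z A B C : Type*} [Fintype X] [Fintype Y] [Fintype Z]
    [Fintype A] [Fintype B] [Fintype C] (G : X → Y → Z → A → B → C → ℝ)
    (hpos : ∀ x y z a b c, 0 ≤ G x y z a b c) :
    ∀ v ∈ {v | ∃ P, IsGenBiloc3 P ∧ v = val3 G P},
      v ≤ ∑ x, ∑ y, ∑ z, ∑ a, ∑ b, ∑ c, G x y z a b c := by
  rintro v ⟨P, hP, rfl⟩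
  refine Finset.sum_le_sum fun x _ => Finset.sum_le_sum fun y _ => Finset.sum_le_sum fun z _ =>
    Finset.sum_le_sum fun a _ => Finset.sum_le_sum fun b _ => Finset.sum_le_sum fun c _ => ?_
  exact mul_le_of_le_one_right (hpos x y z a b c) ((genbiloc_bounds hP x y z a b c).2)

end Aux

/-- for a tripartite Bell functional `G` with nonnegative coefficients and
`K` outputs per player, `ω_{Q³}(G) ≤ K · ω_{BL³_G}(G)`. -/
theorem unbounded_bell_stmt16 {X Y Z : Type*} [Fintype X] [Fintype Y] [Fintype Z] {K : ℕ}
    (G : X → Y → Z → Fin K → Fin K → Fin K → ℝ)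
    (hpos : ∀ x y z a b c, 0 ≤ G x y z a b c) :
    qVal3 G ≤ (K : ℝ) * bVal3 G := by
  have hub := biloc_set_ub G hpos
  have hBdd : BddAbove {v | ∃ P, IsGenBiloc3 P ∧ v = val3 G P} :=
    ⟨_, fun v hv => hub v hv⟩
  have hKb : 0 ≤ (K : ℝ) * bVal3 G := by
    rcases Nat.eq_zero_or_pos K with hK | hK
    · simp [hK]
    · have hKR : (0 : ℝ) < K := by exact_mod_cast hK
      set Q0 : X → Y → Fin K → Fin K → ℝ := fun _ _ _ _ => ((K : ℝ) * K)⁻¹ with hQ0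
      set R0 : Z → Fin K → ℝ := fun _ _ => (K : ℝ)⁻¹ with hR0
      have hQ0b : IsBeh2 Q0 := by
        refine ⟨fun _ _ _ _ => by positivity, fun x y => ?_⟩
        simp [hQ0, Finset.sum_const]
        field_simp
      have hR0b : IsBeh1 R0 := by
        refine ⟨fun _ _ => by positivity, fun x => ?_⟩
        simp [hR0, Finset.sum_const]
        field_simp
      set P0 : X → Y → Z → Fin K → Fin K → Fin K → ℝ :=
        fun x y z a b c => Q0 x y a b * R0 z c with hP0def
      have hP0 : IsGenBiloc3 P0 :=
        ⟨1, fun _ => 1, fun _ => P0, fun _ => zero_le_one, by simp,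
          fun _ => Or.inl ⟨Q0, R0, hQ0b, hR0b, fun _ _ _ _ _ _ => rfl⟩, by simp⟩
      have h0 : 0 ≤ val3 G P0 := by
        refine Finset.sum_nonneg fun x _ => Finset.sum_nonneg fun y _ =>
          Finset.sum_nonneg fun z _ => Finset.sum_nonneg fun a _ =>
          Finset.sum_nonneg fun b _ => Finset.sum_nonneg fun c _ => ?_
        have : (0 : ℝ) ≤ P0 x y z a b c := by
          rw [hP0def]; positivity
        exact mul_nonneg (hpos x y z a b c) this
      exact mul_nonneg (by positivity) (le_trans h0 (le_csSup hBdd ⟨P0, hP0, rfl⟩))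
  apply Real.sSup_le _ hKb
  rintro v ⟨P, ⟨d₁, d₂, d₃, ψ, E, F, H, hψ, hE, hF, hH, hP⟩, rfl⟩
  rcases Nat.eq_zero_or_pos K with hK | hK
  · subst hK
    have : val3 G P = 0 := by simp [val3]
    rw [this]; exact hKb
  by_cases hZ : Nonempty Z
  swap
  · have hZe : IsEmpty Z := not_nonempty_iff.mp hZ
    have : val3 G P = 0 := by simp [val3, Finset.univ_eq_empty]
    rw [this]; exact hKb
  obtain ⟨z₀⟩ := hZ
  -- nonnegativity of P
  have hPnn : ∀ x y z a b c, 0 ≤ P x y z a b c := by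
    intro x y z a b c
    have h0 := quadform_nonneg (psd_kron ((hE x).1 a) (psd_kron ((hF y).1 b) ((hH z).1 c))) ψ
    rw [← hP x y z a b c] at h0
    exact_mod_cast h0
  -- the AB marginal does not depend on z
  have hmarg : ∀ (x : X) (y : Y) (z : Z) (a b : Fin K),
      ((∑ c, P x y z a b c : ℝ) : ℂ) = ∑ i, ∑ j, (starRingEnd ℂ) (ψ i) *
        ((E x a ⊗ₖ (F y b ⊗ₖ (1 : Matrix (Fin d₃) (Fin d₃) ℂ))) i j) * ψ j := by
    intro x y z a b
    push_cast
    calc ∑ c, ((P x y z a b c : ℝ) : ℂ)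
        = ∑ c, ∑ i, ∑ j, (starRingEnd ℂ) (ψ i) *
            ((E x a ⊗ₖ (F y b ⊗ₖ H z c)) i j) * ψ j :=
          Finset.sum_congr rfl fun c _ => hP x y z a b c
      _ = ∑ i, ∑ j, (starRingEnd ℂ) (ψ i) *
            ((∑ c, E x a ⊗ₖ (F y b ⊗ₖ H z c)) i j) * ψ j := sum_quadform ψ _
      _ = ∑ i, ∑ j, (starRingEnd ℂ) (ψ i) *
            ((E x a ⊗ₖ (F y b ⊗ₖ (1 : Matrix (Fin d₃) (Fin d₃) ℂ))) i j) * ψ j := by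
          rw [← kron_sum_right, ← kron_sum_right, (hH z).2]
  set Qm : X → Y → Fin K → Fin K → ℝ := fun x y a b => ∑ c, P x y z₀ a b c with hQm
  have hmargR : ∀ (x : X) (y : Y) (z : Z) (a b : Fin K),
      (∑ c, P x y z a b c) = Qm x y a b := by
    intro x y z a b
    have h2 := (hmarg x y z a b).trans (hmarg x y z₀ a b).symm
    exact_mod_cast h2
  have hQnn : ∀ x y a b, 0 ≤ Qm x y a b := fun x y a b =>
    Finset.sum_nonneg fun c _ => hPnn x y z₀ a b c
  have hQnorm : ∀ x y, (∑ a, ∑ b, Qm x y a b) = 1 := by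
    intro x y
    have hcx : ((∑ a, ∑ b, Qm x y a b : ℝ) : ℂ) = ((1 : ℝ) : ℂ) := by
      push_cast
      calc ∑ a, ∑ b, ((Qm x y a b : ℝ) : ℂ)
          = ∑ a, ∑ b, ∑ i, ∑ j, (starRingEnd ℂ) (ψ i) *
              ((E x a ⊗ₖ (F y b ⊗ₖ (1 : Matrix (Fin d₃) (Fin d₃) ℂ))) i j) * ψ j :=
            Finset.sum_congr rfl fun a _ => Finset.sum_congr rfl fun b _ =>
              hmarg x y z₀ a b
        _ = ∑ a, ∑ i, ∑ j, (starRingEnd ℂ) (ψ i) *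
              ((∑ b, E x a ⊗ₖ (F y b ⊗ₖ (1 : Matrix (Fin d₃) (Fin d₃) ℂ))) i j) * ψ j :=
            Finset.sum_congr rfl fun a _ => sum_quadform ψ _
        _ = ∑ i, ∑ j, (starRingEnd ℂ) (ψ i) *
              ((∑ a, ∑ b, E x a ⊗ₖ (F y b ⊗ₖ (1 : Matrix (Fin d₃) (Fin d₃) ℂ))) i j) * ψ j := by
            rw [← sum_quadform]
        _ = ∑ i, ∑ j, (starRingEnd ℂ) (ψ i) *
              ((1 : Matrix (Fin d₁ × Fin d₂ × Fin d₃) (Fin d₁ × Fin d₂ × Fin d₃) ℂ) i j) * ψ j := by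
            have e1 : ∀ a : Fin K, ∑ b, E x a ⊗ₖ (F y b ⊗ₖ (1 : Matrix (Fin d₃) (Fin d₃) ℂ))
                = E x a ⊗ₖ ((1 : Matrix (Fin d₂) (Fin d₂) ℂ) ⊗ₖ (1 : Matrix (Fin d₃) (Fin d₃) ℂ)) := by
              intro a
              rw [← kron_sum_right, ← kron_sum_left, (hF y).2]
            simp only [e1]
            rw [← kron_sum_left, (hE x).2, Matrix.one_kronecker_one, Matrix.one_kronecker_one]
        _ = ((∑ i, Complex.normSq (ψ i) : ℝ) : ℂ) := quadform_one ψ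
        _ = ((1 : ℝ) : ℂ) := by rw [hψ]
      
    exact_mod_cast hcx
  have hQmB : IsBeh2 Qm := ⟨hQnn, hQnorm⟩
  have hPle : ∀ x y z a b c, P x y z a b c ≤ Qm x y a b := by
    intro x y z a b c
    rw [← hmargR x y z a b]
    exact Finset.single_le_sum (f := fun c' => P x y z a b c')
      (fun c' _ => hPnn x y z a b c') (Finset.mem_univ c)
  -- bilocal behaviours indexed by Charlie's fixed output
  have hc : ∀ c₀ : Fin K,
      (∑ x, ∑ y, ∑ z, ∑ a, ∑ b, G x y z a b c₀ * Qm x y a b) ≤ bVal3 G := by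
    intro c₀
    set Pc : X → Y → Z → Fin K → Fin K → Fin K → ℝ :=
      fun x y z a b c => Qm x y a b * (if c = c₀ then (1 : ℝ) else 0) with hPcdef
    have hRb : IsBeh1 (fun (_ : Z) (c : Fin K) => if c = c₀ then (1 : ℝ) else 0) :=
      ⟨fun _ c => by positivity, fun _ => by simp⟩
    have hbl : IsGenBiloc3 Pc :=
      ⟨1, fun _ => 1, fun _ => Pc, fun _ => zero_le_one, by simp,
        fun _ => Or.inl ⟨Qm, fun (_ : Z) (c : Fin K) => if c = c₀ then (1 : ℝ) else 0,
          hQmB, hRb, fun _ _ _ _ _ _ => rfl⟩, fun x y z a b c => by simp⟩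
    have hval : val3 G Pc = ∑ x, ∑ y, ∑ z, ∑ a, ∑ b, G x y z a b c₀ * Qm x y a b := by
      refine Finset.sum_congr rfl fun x _ => Finset.sum_congr rfl fun y _ =>
        Finset.sum_congr rfl fun z _ => Finset.sum_congr rfl fun a _ =>
        Finset.sum_congr rfl fun b _ => ?_
      rw [Finset.sum_eq_single c₀]
      · simp [hPcdef]
      · intro c _ hcne; simp [hPcdef, hcne]
      · simp
    rw [← hval]
    exact le_csSup hBdd ⟨Pc, hbl, rfl⟩
  -- putting it together
  have key : val3 G P ≤ ∑ x, ∑ y, ∑ z, ∑ a, ∑ b, ∑ c, G x y z a b c * Qm x y a b := by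
    refine Finset.sum_le_sum fun x _ => Finset.sum_le_sum fun y _ => Finset.sum_le_sum fun z _ =>
      Finset.sum_le_sum fun a _ => Finset.sum_le_sum fun b _ => Finset.sum_le_sum fun c _ => ?_
    exact mul_le_mul_of_nonneg_left (hPle x y z a b c) (hpos x y z a b c)
  have hswap : (∑ x, ∑ y, ∑ z, ∑ a, ∑ b, ∑ c, G x y z a b c * Qm x y a b)
      = ∑ c, ∑ x, ∑ y, ∑ z, ∑ a, ∑ b, G x y z a b c * Qm x y a b := by
    calc (∑ x, ∑ y, ∑ z, ∑ a, ∑ b, ∑ c, G x y z a b c * Qm x y a b)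
        = ∑ x, ∑ y, ∑ z, ∑ a, ∑ c, ∑ b, G x y z a b c * Qm x y a b :=
          Finset.sum_congr rfl fun x _ => Finset.sum_congr rfl fun y _ =>
            Finset.sum_congr rfl fun z _ => Finset.sum_congr rfl fun a _ => Finset.sum_comm
      _ = ∑ x, ∑ y, ∑ z, ∑ c, ∑ a, ∑ b, G x y z a b c * Qm x y a b :=
          Finset.sum_congr rfl fun x _ => Finset.sum_congr rfl fun y _ =>
            Finset.sum_congr rfl fun z _ => Finset.sum_comm
      _ = ∑ x, ∑ y, ∑ c, ∑ z, ∑ a, ∑ b, G x y z a b c * Qm x y a b :=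
          Finset.sum_congr rfl fun x _ => Finset.sum_congr rfl fun y _ => Finset.sum_comm
      _ = ∑ x, ∑ c, ∑ y, ∑ z, ∑ a, ∑ b, G x y z a b c * Qm x y a b :=
          Finset.sum_congr rfl fun x _ => Finset.sum_comm
      _ = ∑ c, ∑ x, ∑ y, ∑ z, ∑ a, ∑ b, G x y z a b c * Qm x y a b := Finset.sum_comm
  calc val3 G P ≤ ∑ x, ∑ y, ∑ z, ∑ a, ∑ b, ∑ c, G x y z a b c * Qm x y a b := key
    _ = ∑ c, ∑ x, ∑ y, ∑ z, ∑ a, ∑ b, G x y z a b c * Qm x y a b := hswap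
    _ ≤ ∑ _c : Fin K, bVal3 G := Finset.sum_le_sum fun c _ => hc c
    _ = (K : ℝ) * bVal3 G := by simp [Finset.sum_const, nsmul_eq_mul]

end BellGames
end
end
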